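/- arXiv:2510.02901 — 7 statements merged into one kernel-verified Lean document; each statement's English description precedes it below -/
import Mathlib

section
/- If a graph G admits a k-layering, then G has pathwidth at most k. -/
/-- A path-decomposition of `G`. -/
def IsPathDecomp {V : Type*} (G : SimpleGraph V) (B : ℕ → Set V) : Prop :=
  (∀ v : V, ∃ i, v ∈ B i) ∧
  (∀ ⦃u v : V⦄, G.Adj u v → ∃ i, u ∈ B i ∧ v ∈ B i) ∧
  (∀ (v : V) (i j k : ℕ), i ≤ j → j ≤ k → v ∈ B i → v ∈ B k → v ∈ B j)

/-- The pathwidth of `G`. -/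
noncomputable def pathwidth {V : Type*} (G : SimpleGraph V) : ℕ∞ :=
  sInf {w : ℕ∞ | ∃ B : ℕ → Set V, IsPathDecomp G B ∧ ∀ i, (B i).encard ≤ w + 1}

/-- A layering of `G`: a partition of the vertices into a sequence of
independent sets such that edges only join consecutive layers. -/
def IsLayering {V : Type*} (G : SimpleGraph V) (L : ℕ → Set V) : Prop :=
  (∀ v : V, ∃! i, v ∈ L i) ∧
  (∀ i, ∀ u ∈ L i, ∀ v ∈ L i, ¬ G.Adj u v) ∧
  (∀ i j u v, u ∈ L i → v ∈ L j → G.Adj u v → j = i + 1 ∨ i = j + 1)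

/-- A `k`-layering: a layering with at most `k` edges between any two
consecutive layers. -/
def IsKLayering {V : Type*} (G : SimpleGraph V) (k : ℕ) (L : ℕ → Set V) : Prop :=
  IsLayering G L ∧
  ∀ i, {e ∈ G.edgeSet | ∃ u ∈ L i, ∃ v ∈ L (i + 1), e = s(u, v)}.encard ≤ (k : ℕ∞)


namespace PWAux

lemma natsplit (n a b c d : ℕ) (hb : b < n + 1) (hd : d < n + 1)
    (h : a * (n + 1) + b = c * (n + 1) + d) : a = c ∧ b = d := by
  have h1 : b = d := by
    have h2 : (a * (n + 1) + b) % (n + 1) = (c * (n + 1) + d) % (n + 1) := by rw [h]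
    rw [mul_comm a (n + 1), mul_comm c (n + 1)] at h2
    rwa [Nat.mul_add_mod, Nat.mul_add_mod, Nat.mod_eq_of_lt hb, Nat.mod_eq_of_lt hd] at h2
  subst h1
  have h3 : a * (n + 1) = c * (n + 1) := Nat.add_right_cancel h
  exact ⟨Nat.eq_of_mul_eq_mul_right (Nat.succ_pos n) h3, rfl⟩

variable {V : Type*} (G : SimpleGraph V) (lay : V → ℕ)

/-- The "forward" edges: ordered pairs of adjacent vertices with the second in the next layer. -/
def F : Set (V × V) := {e | G.Adj e.1 e.2 ∧ lay e.2 = lay e.1 + 1}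

/-- The forward edges incident to `v`. -/
def Ed (v : V) : Set (V × V) := {e ∈ F G lay | e.1 = v ∨ e.2 = v}

variable (pos : V × V → ℕ)

/-- The main bags. -/
def mainB (t : ℕ) : Set V :=
  {v | (∃ e ∈ Ed G lay v, pos e ≤ t) ∧ ∃ e ∈ Ed G lay v, t ≤ pos e}

open Classical in
noncomputable def minE (v : V) : V × V :=
  if h : (Ed G lay v).Finite ∧ (Ed G lay v).Nonempty then
    (Set.exists_min_image (Ed G lay v) pos h.1 h.2).choose
  else (v, v)

open Classical in
noncomputable def maxE (v : V) : V × V :=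
  if h : (Ed G lay v).Finite ∧ (Ed G lay v).Nonempty then
    (Set.exists_max_image (Ed G lay v) pos h.1 h.2).choose
  else (v, v)

lemma minE_spec {v : V} (hfin : (Ed G lay v).Finite) (hne : (Ed G lay v).Nonempty) :
    minE G lay pos v ∈ Ed G lay v ∧ ∀ f ∈ Ed G lay v, pos (minE G lay pos v) ≤ pos f := by
  rw [minE, dif_pos ⟨hfin, hne⟩]
  exact (Set.exists_min_image (Ed G lay v) pos hfin hne).choose_spec

lemma maxE_spec {v : V} (hfin : (Ed G lay v).Finite) (hne : (Ed G lay v).Nonempty) :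
    maxE G lay pos v ∈ Ed G lay v ∧ ∀ f ∈ Ed G lay v, pos f ≤ pos (maxE G lay pos v) := by
  rw [maxE, dif_pos ⟨hfin, hne⟩]
  exact (Set.exists_max_image (Ed G lay v) pos hfin hne).choose_spec

lemma lay_mem_of_edge {e : V × V} {v : V} (he : e ∈ Ed G lay v) :
    lay v = lay e.1 ∨ lay v = lay e.1 + 1 := by
  rcases he.2 with h | h
  · exact Or.inl (by rw [h])
  · exact Or.inr (by rw [← he.1.2, h])

theorem mainB_bound {k : ℕ} (t : ℕ)
    (hFfin : (F G lay).Finite)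
    (hinj : Set.InjOn pos (F G lay))
    (hmono : ∀ e ∈ F G lay, ∀ f ∈ F G lay, pos e ≤ pos f → lay e.1 ≤ lay f.1)
    (hk : ∀ i, {e ∈ F G lay | lay e.1 = i}.encard ≤ (k : ℕ∞)) :
    (mainB G lay pos t).encard ≤ (k : ℕ∞) + 1 ∧
      ((∀ e ∈ F G lay, pos e ≠ t) → (mainB G lay pos t).encard ≤ (k : ℕ∞)) := by
  classical
  have hEdfin : ∀ v : V, (Ed G lay v).Finite := fun v => hFfin.subset (Set.sep_subset _ _)
  have hEdne : ∀ v ∈ mainB G lay pos t, (Ed G lay v).Nonempty := by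
    rintro v ⟨⟨e, he, -⟩, -⟩; exact ⟨e, he⟩
  by_cases hT : ({e ∈ F G lay | pos e ≤ t}).Nonempty
  swap
  · -- no edge comes before t, so the main bag is empty
    have hempty : mainB G lay pos t = ∅ := by
      ext v
      simp only [Set.mem_empty_iff_false, iff_false]
      rintro ⟨⟨e, he, het⟩, -⟩
      exact hT ⟨e, he.1, het⟩
    rw [hempty]
    simp
  obtain ⟨estar, hestar, hestarmax⟩ :=
    Set.exists_max_image _ pos (hFfin.subset (Set.sep_subset _ _)) hT
  set i : ℕ := lay estar.1 with hi
  have fact1 : ∀ f ∈ F G lay, pos f ≤ t → lay f.1 ≤ i := by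
    intro f hf hft
    exact hmono f hf estar hestar.1 (hestarmax f ⟨hf, hft⟩)
  have fact2 : ∀ g ∈ F G lay, t ≤ pos g → i ≤ lay g.1 := by
    intro g hg hgt
    exact hmono estar hestar.1 g hg (hestar.2.trans hgt)
  have laycases : ∀ v ∈ mainB G lay pos t, lay v = i ∨ lay v = i + 1 := by
    rintro v ⟨⟨e, he, het⟩, ⟨e', he', hte'⟩⟩
    have h1 : lay e.1 ≤ i := fact1 e he.1 het
    have h2 : i ≤ lay e'.1 := fact2 e' he'.1 hte'
    have h3 := lay_mem_of_edge G lay he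
    have h4 := lay_mem_of_edge G lay he'
    omega
  -- properties of the chosen extremal edges
  have keyL : ∀ v ∈ mainB G lay pos t, lay v = i →
      (maxE G lay pos v).1 = v ∧ maxE G lay pos v ∈ F G lay ∧
        lay (maxE G lay pos v).1 = i ∧ t ≤ pos (maxE G lay pos v) := by
    rintro v hv hvi
    obtain ⟨e', he', hte'⟩ := hv.2
    obtain ⟨hmem, hmax⟩ := maxE_spec G lay pos (hEdfin v) (hEdne v hv)
    set e := maxE G lay pos v
    have hposte : t ≤ pos e := hte'.trans (hmax e' he')
    have hge : i ≤ lay e.1 := fact2 e hmem.1 hposte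
    rcases hmem.2 with h | h
    · exact ⟨h, hmem.1, by rw [h, hvi], hposte⟩
    · exfalso
      have : lay e.2 = lay e.1 + 1 := hmem.1.2
      rw [h, hvi] at this
      omega
  have keyR : ∀ v ∈ mainB G lay pos t, lay v = i + 1 →
      (minE G lay pos v).2 = v ∧ minE G lay pos v ∈ F G lay ∧
        lay (minE G lay pos v).1 = i ∧ pos (minE G lay pos v) ≤ t := by
    rintro v hv hvi
    obtain ⟨e', he', he't⟩ := hv.1
    obtain ⟨hmem, hmin⟩ := minE_spec G lay pos (hEdfin v) (hEdne v hv)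
    set e := minE G lay pos v
    have hposte : pos e ≤ t := (hmin e' he').trans he't
    have hle : lay e.1 ≤ i := fact1 e hmem.1 hposte
    rcases hmem.2 with h | h
    · exfalso; rw [h, hvi] at hle; omega
    · refine ⟨h, hmem.1, ?_, hposte⟩
      have : lay e.2 = lay e.1 + 1 := hmem.1.2
      rw [h, hvi] at this
      omega
  set Exc : Set V := {v ∈ mainB G lay pos t | lay v = i + 1 ∧ pos (minE G lay pos v) = t}
    with hExcdef
  have hExcsub : Exc ⊆ mainB G lay pos t := Set.sep_subset _ _
  have hExc1 : Exc.encard ≤ 1 := by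
    rw [Set.encard_le_one_iff]
    rintro a b ⟨ha, hai, hat⟩ ⟨hb, hbi, hbt⟩
    have hka := keyR a ha hai
    have hkb := keyR b hb hbi
    have : minE G lay pos a = minE G lay pos b :=
      hinj hka.2.1 hkb.2.1 (by rw [hat, hbt])
    rw [← hka.1, ← hkb.1, this]
  set Rest : Set V := mainB G lay pos t \ Exc with hRestdef
  set Φ : V → V × V := fun v => if lay v = i + 1 then minE G lay pos v else maxE G lay pos v
    with hΦ
  have hmaps : Set.MapsTo Φ Rest {e ∈ F G lay | lay e.1 = i} := by
    rintro v ⟨hv, -⟩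
    rcases laycases v hv with h | h
    · have hkl := keyL v hv h
      simp only [hΦ, if_neg (by omega : ¬ lay v = i + 1)]
      exact ⟨hkl.2.1, hkl.2.2.1⟩
    · have hkr := keyR v hv h
      simp only [hΦ, if_pos h]
      exact ⟨hkr.2.1, hkr.2.2.1⟩
  have hΦinj : Set.InjOn Φ Rest := by
    rintro a ⟨ha, hanot⟩ b ⟨hb, hbnot⟩ hab
    rcases laycases a ha with h1 | h1 <;> rcases laycases b hb with h2 | h2
    · have hka := keyL a ha h1; have hkb := keyL b hb h2
      have : Φ a = maxE G lay pos a := by simp only [hΦ, if_neg (by omega : ¬ lay a = i + 1)]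
      have hb' : Φ b = maxE G lay pos b := by simp only [hΦ, if_neg (by omega : ¬ lay b = i + 1)]
      rw [← hka.1, ← hkb.1, ← this, ← hb', hab]
    · -- a left-type, b right-type : impossible
      exfalso
      have hka := keyL a ha h1; have hkb := keyR b hb h2
      have ha' : Φ a = maxE G lay pos a := by simp only [hΦ, if_neg (by omega : ¬ lay a = i + 1)]
      have hb' : Φ b = minE G lay pos b := by simp only [hΦ, if_pos h2]
      have hbne : pos (minE G lay pos b) ≠ t := by
        intro hcon; exact hbnot ⟨hb, h2, hcon⟩
      have h3 : t ≤ pos (Φ a) := ha' ▸ hka.2.2.2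
      have h4 : pos (Φ b) < t := lt_of_le_of_ne (hb' ▸ hkb.2.2.2) (hb' ▸ hbne)
      rw [hab] at h3; omega
    · exfalso
      have hka := keyR a ha h1; have hkb := keyL b hb h2
      have ha' : Φ a = minE G lay pos a := by simp only [hΦ, if_pos h1]
      have hb' : Φ b = maxE G lay pos b := by simp only [hΦ, if_neg (by omega : ¬ lay b = i + 1)]
      have hane : pos (minE G lay pos a) ≠ t := by
        intro hcon; exact hanot ⟨ha, h1, hcon⟩
      have h3 : t ≤ pos (Φ b) := hb' ▸ hkb.2.2.2
      have h4 : pos (Φ a) < t := lt_of_le_of_ne (ha' ▸ hka.2.2.2) (ha' ▸ hane)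
      rw [hab] at h4; omega
    · have hka := keyR a ha h1; have hkb := keyR b hb h2
      have ha' : Φ a = minE G lay pos a := by simp only [hΦ, if_pos h1]
      have hb' : Φ b = minE G lay pos b := by simp only [hΦ, if_pos h2]
      rw [← hka.1, ← hkb.1, ← ha', ← hb', hab]
  have hRest : Rest.encard ≤ (k : ℕ∞) :=
    (Set.encard_le_encard_of_injOn hmaps hΦinj).trans (hk i)
  have hsplit : mainB G lay pos t = Exc ∪ Rest := (Set.union_diff_cancel hExcsub).symm
  constructor
  · calc (mainB G lay pos t).encard ≤ Exc.encard + Rest.encard := by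
          rw [hsplit]; exact Set.encard_union_le _ _
      _ ≤ 1 + (k : ℕ∞) := add_le_add hExc1 hRest
      _ = (k : ℕ∞) + 1 := add_comm _ _
  · intro hnone
    have hExcE : Exc = ∅ := by
      ext v
      simp only [Set.mem_empty_iff_false, iff_false]
      rintro ⟨hv, hvi, hvt⟩
      exact hnone _ (keyR v hv hvi).2.1 hvt
    calc (mainB G lay pos t).encard ≤ Exc.encard + Rest.encard := by
          rw [hsplit]; exact Set.encard_union_le _ _
      _ ≤ 0 + (k : ℕ∞) := add_le_add (by rw [hExcE]; simp) hRest
      _ = (k : ℕ∞) := by rw [zero_add]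

end PWAux

/-- If a graph admits a `k`-layering, then its pathwidth is at most `k`. -/
theorem pathwidth_le_of_kLayering {V : Type*} [Finite V] (G : SimpleGraph V)
    (k : ℕ) (L : ℕ → Set V) (hL : IsKLayering G k L) :
    pathwidth G ≤ (k : ℕ∞) := by
  classical
  choose lay hmem _huniq using hL.1.1
  obtain ⟨ι, hιinj⟩ : ∃ ι : V → ℕ, Function.Injective ι := by
    obtain ⟨n, ⟨eV⟩⟩ := Finite.exists_equiv_fin V
    exact ⟨fun v => (eV v : ℕ), fun a b h => eV.injective (Fin.val_injective h)⟩
  have hFfin : (PWAux.F G lay).Finite := Set.toFinite _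
  -- construct the position function on forward edges
  obtain ⟨pos, hposinj, hposmono, hposeven⟩ :
      ∃ pos : V × V → ℕ, Set.InjOn pos (PWAux.F G lay) ∧
        (∀ e ∈ PWAux.F G lay, ∀ f ∈ PWAux.F G lay, pos e ≤ pos f → lay e.1 ≤ lay f.1) ∧
        (∀ e, ∃ m, pos e = 2 * m) := by
    obtain ⟨n, ⟨eV⟩⟩ := Finite.exists_equiv_fin V
    set ι' : V → ℕ := fun v => (eV v : ℕ) with hι'
    have hι'lt : ∀ v, ι' v < n + 1 := fun v => Nat.lt_succ_of_lt (eV v).isLt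
    have hι'inj : Function.Injective ι' := fun a b h => eV.injective (Fin.val_injective h)
    set κ : V × V → ℕ := fun e => (lay e.1 * (n + 1) + ι' e.1) * (n + 1) + ι' e.2 with hκ
    have hκmono : ∀ e f : V × V, lay e.1 < lay f.1 → κ e < κ f := by
      intro e f h
      have h1 := hι'lt e.1; have h2 := hι'lt e.2; have h3 := hι'lt f.1
      have hA : lay e.1 * (n + 1) + ι' e.1 + 1 ≤ lay f.1 * (n + 1) + ι' f.1 := by nlinarith
      show (lay e.1 * (n + 1) + ι' e.1) * (n + 1) + ι' e.2
          < (lay f.1 * (n + 1) + ι' f.1) * (n + 1) + ι' f.2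
      nlinarith
    have hκinj : Function.Injective κ := by
      intro e f h
      have hlay_eq : lay e.1 = lay f.1 := by
        by_contra hne
        rcases Nat.lt_or_ge (lay e.1) (lay f.1) with hlt | hge
        · exact absurd h (Nat.ne_of_lt (hκmono e f hlt))
        · exact absurd h.symm (Nat.ne_of_lt (hκmono f e (lt_of_le_of_ne hge (Ne.symm hne))))
      obtain ⟨hA, h2⟩ := PWAux.natsplit n _ _ _ _ (hι'lt e.2) (hι'lt f.2) h
      obtain ⟨h3, h4⟩ := PWAux.natsplit n _ _ _ _ (hι'lt e.1) (hι'lt f.1) hA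
      exact Prod.ext (hι'inj h4) (hι'inj h2)
    refine ⟨fun e => 2 * ({f ∈ PWAux.F G lay | κ f < κ e}.ncard), ?_, ?_, fun e => ⟨_, rfl⟩⟩
    · have hstrict : ∀ e ∈ PWAux.F G lay, ∀ f : V × V, κ e < κ f →
          2 * ({g ∈ PWAux.F G lay | κ g < κ e}.ncard)
            < 2 * ({g ∈ PWAux.F G lay | κ g < κ f}.ncard) := by
        intro e he f hlt
        have hss : {g ∈ PWAux.F G lay | κ g < κ e} ⊂ {g ∈ PWAux.F G lay | κ g < κ f} := by
          constructor
          · rintro g ⟨hg1, hg2⟩; exact ⟨hg1, hg2.trans hlt⟩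
          · intro hcon
            have : e ∈ {g ∈ PWAux.F G lay | κ g < κ e} := hcon ⟨he, hlt⟩
            exact absurd this.2 (lt_irrefl _)
        have := Set.ncard_lt_ncard hss (hFfin.subset (Set.sep_subset _ _))
        omega
      intro e he f hf h
      rcases lt_trichotomy (κ e) (κ f) with h1 | h1 | h1
      · exact absurd h (Nat.ne_of_lt (hstrict e he f h1))
      · exact hκinj h1
      · exact absurd h.symm (Nat.ne_of_lt (hstrict f hf e h1))
    · -- monotonicity of layers along positions
      intro e he f hf h
      simp only at h
      by_contra hcon
      push_neg at hcon
      have h1 := hκmono f e hcon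
      have hss : {g ∈ PWAux.F G lay | κ g < κ f} ⊂ {g ∈ PWAux.F G lay | κ g < κ e} := by
        constructor
        · rintro g ⟨hg1, hg2⟩; exact ⟨hg1, hg2.trans h1⟩
        · intro hcon2
          have : f ∈ {g ∈ PWAux.F G lay | κ g < κ f} := hcon2 ⟨hf, h1⟩
          exact absurd this.2 (lt_irrefl _)
      have := Set.ncard_lt_ncard hss (hFfin.subset (Set.sep_subset _ _))
      omega
  -- the per-layer edge bound
  have hk : ∀ i, {e ∈ PWAux.F G lay | lay e.1 = i}.encard ≤ (k : ℕ∞) := by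
    intro i
    refine le_trans (Set.encard_le_encard_of_injOn
      (f := fun e : V × V => s(e.1, e.2)) ?_ ?_) (hL.2 i)
    · rintro ⟨u, v⟩ ⟨⟨hadj, hlayuv⟩, hlayi⟩
      refine ⟨G.mem_edgeSet.mpr hadj, u, ?_, v, ?_, rfl⟩
      · have := hmem u; rwa [hlayi] at this
      · have := hmem v; rwa [hlayuv, hlayi] at this
    · rintro ⟨u, v⟩ ⟨⟨-, h1⟩, h2⟩ ⟨u', v'⟩ ⟨⟨-, h1'⟩, h2'⟩ hs
      simp only [Sym2.eq_iff] at hs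
      rcases hs with ⟨h3, h4⟩ | ⟨h3, h4⟩
      · exact Prod.ext h3 h4
      · exfalso
        rw [← h3] at h1'
        simp only at h1 h1' h2 h2'
        omega
  -- forward edges cover all adjacencies
  have hFor : ∀ u v : V, G.Adj u v →
      (u, v) ∈ PWAux.F G lay ∨ (v, u) ∈ PWAux.F G lay := by
    intro u v hadj
    rcases hL.1.2.2 (lay u) (lay v) u v (hmem u) (hmem v) hadj with h | h
    · exact Or.inl ⟨hadj, h⟩
    · exact Or.inr ⟨hadj.symm, h⟩
  have hbound := fun t => PWAux.mainB_bound G lay pos t hFfin hposinj hposmono hk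
  refine sInf_le ⟨fun t => PWAux.mainB G lay pos t ∪
      {v | PWAux.Ed G lay v = ∅ ∧ 2 * ι v + 1 = t}, ⟨?_, ?_, ?_⟩, ?_⟩
  · -- every vertex is in some bag
    intro v
    by_cases h : (PWAux.Ed G lay v).Nonempty
    · obtain ⟨e, he⟩ := h
      exact ⟨pos e, Or.inl ⟨⟨e, he, le_refl _⟩, ⟨e, he, le_refl _⟩⟩⟩
    · exact ⟨2 * ι v + 1, Or.inr ⟨Set.not_nonempty_iff_eq_empty.mp h, rfl⟩⟩
  · -- every edge is in some bag
    intro u v hadj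
    rcases hFor u v hadj with h | h
    · refine ⟨pos (u, v), Or.inl ?_, Or.inl ?_⟩
      · exact ⟨⟨(u, v), ⟨h, Or.inl rfl⟩, le_refl _⟩, ⟨(u, v), ⟨h, Or.inl rfl⟩, le_refl _⟩⟩
      · exact ⟨⟨(u, v), ⟨h, Or.inr rfl⟩, le_refl _⟩, ⟨(u, v), ⟨h, Or.inr rfl⟩, le_refl _⟩⟩
    · refine ⟨pos (v, u), Or.inl ?_, Or.inl ?_⟩
      · exact ⟨⟨(v, u), ⟨h, Or.inr rfl⟩, le_refl _⟩, ⟨(v, u), ⟨h, Or.inr rfl⟩, le_refl _⟩⟩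
      · exact ⟨⟨(v, u), ⟨h, Or.inl rfl⟩, le_refl _⟩, ⟨(v, u), ⟨h, Or.inl rfl⟩, le_refl _⟩⟩
  · -- the bags containing a vertex form an interval
    intro v t1 j t2 h12 h23 hm1 hm2
    rcases hm1 with hm1 | hm1 <;> rcases hm2 with hm2 | hm2
    · obtain ⟨⟨e, he, he1⟩, -⟩ := hm1
      obtain ⟨-, e', he', he2⟩ := hm2
      exact Or.inl ⟨⟨e, he, he1.trans h12⟩, ⟨e', he', h23.trans he2⟩⟩
    · exfalso
      obtain ⟨⟨e, he, -⟩, -⟩ := hm1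
      rw [hm2.1] at he
      exact absurd he (Set.notMem_empty _)
    · exfalso
      obtain ⟨⟨e, he, -⟩, -⟩ := hm2
      rw [hm1.1] at he
      exact absurd he (Set.notMem_empty _)
    · refine Or.inr ⟨hm1.1, ?_⟩
      have h1 := hm1.2; have h2 := hm2.2
      omega
  · -- the size bound
    intro t
    have hisosub : {v | PWAux.Ed G lay v = ∅ ∧ 2 * ι v + 1 = t}.encard ≤ 1 := by
      rw [Set.encard_le_one_iff]
      rintro a b ⟨-, ha⟩ ⟨-, hb⟩
      exact hιinj (by omega)
    by_cases hiso : {v | PWAux.Ed G lay v = ∅ ∧ 2 * ι v + 1 = t} = (∅ : Set V)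
    · show (PWAux.mainB G lay pos t ∪
          {v | PWAux.Ed G lay v = ∅ ∧ 2 * ι v + 1 = t}).encard ≤ (k : ℕ∞) + 1
      rw [hiso, Set.union_empty]
      exact (hbound t).1
    · obtain ⟨v, -, hv⟩ := Set.nonempty_iff_ne_empty.mpr hiso
      have hodd : ∀ e ∈ PWAux.F G lay, pos e ≠ t := by
        intro e he hcon
        obtain ⟨m, hm⟩ := hposeven e
        omega
      calc (PWAux.mainB G lay pos t ∪
            {v | PWAux.Ed G lay v = ∅ ∧ 2 * ι v + 1 = t}).encard
          ≤ (PWAux.mainB G lay pos t).encard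
            + {v | PWAux.Ed G lay v = ∅ ∧ 2 * ι v + 1 = t}.encard :=
            Set.encard_union_le _ _
        _ ≤ (k : ℕ∞) + 1 := add_le_add ((hbound t).2 hodd) hisosub
end

section
/- Let G be a graph, P_1 a shortest path from a_1 to b_1, and let a, b, c be vertices with d(a_1,a) <= d(a_1,b) <= d(a_1,c). Suppose P is a path from a to b parallel to P_1 and Q is a path from b to c parallel to P_1, where P and Q are internally disjoint and share only the vertex b. Then the concatenation P·Q is a path parallel to P_1. -/
/-- A walk of `G` from `u` to `v` is parallel to the (shortest) `a₁b₁`-path `P₁`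
if it is a (contiguous) subpath of some shortest path from `a₁` to `b₁` in `G`. -/
def IsParallel {V : Type*} [DecidableEq V] (G : SimpleGraph V) (a₁ b₁ : V) {u v : V}
    (Q : G.Walk u v) : Prop :=
  ∃ R : G.Walk a₁ b₁, R.IsPath ∧ R.length = G.dist a₁ b₁ ∧
    ∃ (hu : u ∈ R.support) (hv : v ∈ (R.dropUntil u hu).support),
      Q = (R.dropUntil u hu).takeUntil v hv

namespace ParallelAux

open SimpleGraph Walk

variable {V : Type*} [DecidableEq V] {G : SimpleGraph V}

lemma takeUntil_first {u v : V} (p : G.Walk u v) (h : u ∈ p.support) :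
    p.takeUntil u h = Walk.nil := by
  cases p with
  | nil => rfl
  | cons r q => simp [Walk.takeUntil]

lemma dropUntil_first {u v : V} (p : G.Walk u v) (h : u ∈ p.support) :
    p.dropUntil u h = p := by
  cases p with
  | nil => rfl
  | cons r q => simp [Walk.dropUntil]

lemma dropUntil_append_left {u v w x : V} (p : G.Walk u v) (q : G.Walk v w)
    (h : x ∈ p.support) (h' : x ∈ (p.append q).support) :
    (p.append q).dropUntil x h' = (p.dropUntil x h).append q := by
  induction p with
  | nil =>
      rw [Walk.mem_support_nil_iff] at h; subst h
      rw [dropUntil_first, dropUntil_first, Walk.nil_append]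
  | @cons u' v' w' r p ih =>
      by_cases hx : u' = x
      · subst hx
        rw [dropUntil_first, dropUntil_first]
      · have hxp : x ∈ p.support := by
          cases h with
          | head => exact absurd rfl hx
          | tail _ h => exact h
        show (Walk.cons r (p.append q)).dropUntil x h' = ((Walk.cons r p).dropUntil x h).append q
        simp only [Walk.dropUntil]
        rw [dif_neg hx, dif_neg hx]
        exact ih q _ _

lemma takeUntil_append_left {u v w x : V} (p : G.Walk u v) (q : G.Walk v w)
    (h : x ∈ p.support) (h' : x ∈ (p.append q).support) :
    (p.append q).takeUntil x h' = p.takeUntil x h := by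
  induction p with
  | nil =>
      rw [Walk.mem_support_nil_iff] at h; subst h
      rw [takeUntil_first, takeUntil_first]
  | @cons u' v' w' r p ih =>
      by_cases hx : u' = x
      · subst hx
        rw [takeUntil_first, takeUntil_first]
      · have hxp : x ∈ p.support := by
          cases h with
          | head => exact absurd rfl hx
          | tail _ h => exact h
        show (Walk.cons r (p.append q)).takeUntil x h' = (Walk.cons r p).takeUntil x h
        simp only [Walk.takeUntil]
        rw [dif_neg hx, dif_neg hx]
        exact congrArg (Walk.cons r) (ih q hxp _)

lemma takeUntil_append_right {u v w x : V} (p : G.Walk u v) (q : G.Walk v w)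
    (hnp : x ∉ p.support) (h : x ∈ q.support) (h' : x ∈ (p.append q).support) :
    (p.append q).takeUntil x h' = p.append (q.takeUntil x h) := by
  induction p with
  | nil => rfl
  | @cons u' v' w' r p ih =>
      have hx : u' ≠ x := fun e => hnp (e ▸ Walk.start_mem_support _)
      have hnp' : x ∉ p.support := fun hh => hnp (List.mem_cons_of_mem _ hh)
      show (Walk.cons r (p.append q)).takeUntil x h' = (Walk.cons r p).append (q.takeUntil x h)
      simp only [Walk.takeUntil]
      rw [dif_neg hx]
      rw [ih q hnp' _]
      rfl

/-- Any initial segment of a shortest walk is a shortest walk. -/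
lemma prefix_length_eq {a₁ b₁ x : V} (R : G.Walk a₁ b₁) (hRl : R.length = G.dist a₁ b₁)
    (W : G.Walk a₁ x) (rest : G.Walk x b₁) (hsplit : W.append rest = R) :
    W.length = G.dist a₁ x := by
  obtain ⟨W', hW'⟩ := SimpleGraph.Reachable.exists_walk_length_eq_dist (⟨W⟩ : G.Reachable a₁ x)
  have h1 : G.dist a₁ x ≤ W.length := SimpleGraph.dist_le W
  have h2 : G.dist a₁ b₁ ≤ (W'.append rest).length := SimpleGraph.dist_le _
  have h3 := congrArg Walk.length hsplit
  rw [Walk.length_append] at h3 h2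
  omega

lemma path_takeUntil_end {u v : V} (p : G.Walk u v) (hp : p.IsPath) (h : v ∈ p.support) :
    p.takeUntil v h = p := by
  have hd : (p.dropUntil v h).IsPath := hp.dropUntil h
  rw [Walk.isPath_iff_eq_nil] at hd
  have := p.take_spec h
  rw [hd, Walk.append_nil] at this
  exact this

lemma path_dropUntil_end {u v : V} (p : G.Walk u v) (hp : p.IsPath) (h : v ∈ p.support) :
    p.dropUntil v h = Walk.nil := by
  have hd : (p.dropUntil v h).IsPath := hp.dropUntil h
  rwa [Walk.isPath_iff_eq_nil] at hd

end ParallelAux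

open SimpleGraph Walk ParallelAux

/-- If `a ≤₁ b ≤₁ c` (distances from `a₁`), `P` is a path from `a` to `b`
parallel to `P₁`, and `Q` is a path from `b` to `c` parallel to `P₁`, with `P`
and `Q` sharing only the vertex `b`, then the concatenation `P·Q` is parallel
to `P₁`. -/
theorem parallel_concat {V : Type*} [DecidableEq V] (G : SimpleGraph V) (a₁ b₁ : V)
    (P₁ : G.Walk a₁ b₁) (hP₁path : P₁.IsPath)
    (hP₁short : P₁.length = G.dist a₁ b₁)
    (a b c : V)
    (hab : G.dist a₁ a ≤ G.dist a₁ b) (hbc : G.dist a₁ b ≤ G.dist a₁ c)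
    (P : G.Walk a b) (Q : G.Walk b c)
    (hP : IsParallel G a₁ b₁ P) (hQ : IsParallel G a₁ b₁ Q)
    (hdisj : ∀ x, x ∈ P.support → x ∈ Q.support → x = b) :
    IsParallel G a₁ b₁ (P.append Q) := by
  obtain ⟨R, hRp, hRl, haR, hbRa, hPeq⟩ := hP
  obtain ⟨R', hR'p, hR'l, hbR', hcR'b, hQeq⟩ := hQ
  set A := R.takeUntil a haR with hA
  set D := R'.dropUntil b hbR' with hD
  have hPpath : P.IsPath := by rw [hPeq]; exact (hRp.dropUntil haR).takeUntil hbRa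
  -- splitting facts
  have hsplitR : A.append (R.dropUntil a haR) = R := R.take_spec haR
  have hsplitP : P.append ((R.dropUntil a haR).dropUntil b hbRa) = R.dropUntil a haR := by
    rw [hPeq]; exact (R.dropUntil a haR).take_spec hbRa
  have hsplitR' : (R'.takeUntil b hbR').append D = R' := R'.take_spec hbR'
  -- length facts
  have hlA : A.length = G.dist a₁ a := prefix_length_eq R hRl A _ hsplitR
  have hlAP : (A.append P).length = G.dist a₁ b := by
    apply prefix_length_eq R hRl (A.append P) ((R.dropUntil a haR).dropUntil b hbRa)
    rw [← Walk.append_assoc, hsplitP, hsplitR]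
  have hlT' : (R'.takeUntil b hbR').length = G.dist a₁ b :=
    prefix_length_eq R' hR'l _ D hsplitR'
  have hlD : (R'.takeUntil b hbR').length + D.length = G.dist a₁ b₁ := by
    have := congrArg Walk.length hsplitR'
    rwa [Walk.length_append, hR'l] at this
  -- the new shortest path
  have hSl : (A.append (P.append D)).length = G.dist a₁ b₁ := by
    have h1 : (A.append (P.append D)).length = A.length + (P.length + D.length) := by
      rw [Walk.length_append, Walk.length_append]
    have h2 : (A.append P).length = A.length + P.length := Walk.length_append _ _
    omega
  have hSpath : (A.append (P.append D)).IsPath :=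
    Walk.isPath_of_length_eq_dist _ hSl
  have haA : a ∈ A.support := Walk.end_mem_support _
  have huS : a ∈ (A.append (P.append D)).support := by
    rw [Walk.mem_support_append_iff]; left; exact haA
  have key : (A.append (P.append D)).dropUntil a huS = P.append D := by
    rw [dropUntil_append_left A (P.append D) haA huS,
      path_dropUntil_end A (hRp.takeUntil haR) haA, Walk.nil_append]
  refine ⟨A.append (P.append D), hSpath, hSl, huS, ?_⟩
  rw [key]
  have hcD : c ∈ D.support :=
    Walk.support_takeUntil_subset D hcR'b (by rw [hQeq] at *; exact Walk.end_mem_support _)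
  have hcPD : c ∈ (P.append D).support := by
    rw [Walk.mem_support_append_iff]; right; exact hcD
  refine ⟨hcPD, ?_⟩
  by_cases hcP : c ∈ P.support
  · have hcb : c = b := hdisj c hcP (Walk.end_mem_support Q)
    subst hcb
    have hq0 : Q = Walk.nil := by rw [hQeq]; exact takeUntil_first D hcR'b
    rw [hq0, Walk.append_nil, takeUntil_append_left P D hcP hcPD]
    exact (path_takeUntil_end P hPpath hcP).symm
  · rw [takeUntil_append_right P D hcP hcD hcPD, hQeq]
end

section
/- Every graph whose edge set can be covered by 2 shortest paths has pathwidth at most 2. -/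
/-!
Write `u i := P₁.getVert i` and `v j := P₂.getVert j`. Along a shortest path the distance between
two vertices is the difference of their indices, so any two common vertices `u i = v j` and
`u i' = v j'` satisfy `|i - i'| = |j - j'|`. Hence, after possibly reversing `P₂`, all common
vertices satisfy `i + c₁ = j + c₂` for fixed offsets. Put `u i` at position `2 (i + c₁)` and `v j`
at position `2 (j + c₂) + 1` on a line: every vertex then occupies one position or two
consecutive ones, and the ends of every edge lie at most two positions apart, so the windows of
three consecutive positions are the bags of a path-decomposition of width `2`. Vertices on
neither path are isolated and get positions of their own beyond both paths.
-/

open SimpleGraph Function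

lemma Set.ordConnected_of_forall_le_add_one {s : Set ℕ} (h : ∀ a ∈ s, ∀ b ∈ s, b ≤ a + 1) :
    s.OrdConnected :=
  ⟨fun a ha b hb n hn => by
    rcases (show n = a ∨ n = b by have := h a ha b hb; simp only [Set.mem_Icc] at hn; omega)
      with rfl | rfl <;> assumption⟩

lemma exists_translation_or_reflection_of_abs_sub_eq {R : ℕ → ℕ → Prop}
    (h : ∀ i j i' j', R i j → R i' j' → |(i : ℤ) - i'| = |(j : ℤ) - j'|) :
    (∃ c₁ c₂ : ℕ, ∀ i j, R i j → i + c₁ = j + c₂) ∨ ∃ c : ℕ, ∀ i j, R i j → i + j = c := by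
  by_cases hR : ∃ i₀ j₀, R i₀ j₀
  · obtain ⟨i₀, j₀, h₀⟩ := hR
    by_cases htr : ∀ i j, R i j → i + j₀ = j + i₀
    · exact Or.inl ⟨j₀, i₀, htr⟩
    push Not at htr
    obtain ⟨i₁, j₁, h₁, hne⟩ := htr
    refine Or.inr ⟨i₀ + j₀, fun i j hij => ?_⟩
    have e₀₁ := abs_eq_abs.mp (h _ _ _ _ h₀ h₁)
    have e₀ := abs_eq_abs.mp (h _ _ _ _ hij h₀)
    have e₁ := abs_eq_abs.mp (h _ _ _ _ hij h₁)
    omega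
  · exact Or.inl ⟨0, 0, fun i j hij => (hR ⟨i, j, hij⟩).elim⟩

section Layout

variable {V : Type*} {G : SimpleGraph V} {pos : V → Set ℕ} {k : ℕ}

def windowBags (pos : V → Set ℕ) (k m : ℕ) : Set V :=
  {x | ∃ n ∈ pos x, n ≤ m ∧ m ≤ n + k}

lemma isPathDecomp_windowBags (hne : ∀ x, (pos x).Nonempty) (hconv : ∀ x, (pos x).OrdConnected)
    (hadj : ∀ ⦃x y⦄, G.Adj x y → ∃ n ∈ pos x, ∃ n' ∈ pos y, n ≤ n' + k ∧ n' ≤ n + k) :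
    IsPathDecomp G (windowBags pos k) := by
  refine ⟨fun x => ?_, fun x y hxy => ?_, fun x i j l hij hjl hi hl => ?_⟩
  · obtain ⟨n, hn⟩ := hne x
    exact ⟨n, n, hn, le_rfl, Nat.le_add_right n k⟩
  · obtain ⟨n, hn, n', hn', h, h'⟩ := hadj hxy
    exact ⟨max n n', ⟨n, hn, le_max_left .., by omega⟩, ⟨n', hn', le_max_right .., by omega⟩⟩
  · obtain ⟨n, hn, hni, hin⟩ := hi
    obtain ⟨n', hn', hn'l, hln'⟩ := hl
    by_cases h : j ≤ n + k
    · exact ⟨n, hn, by omega, h⟩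
    by_cases h' : n' ≤ j
    · exact ⟨n', hn', h', by omega⟩
    exact ⟨j, (hconv x).out hn hn' ⟨by omega, by omega⟩, le_rfl, by omega⟩

lemma encard_windowBags_le (hdisj : Pairwise (Disjoint on pos)) (k m : ℕ) :
    (windowBags pos k m).encard ≤ k + 1 := by
  have hwin : ∀ x ∈ windowBags pos k m, ∃ n ∈ pos x, n ∈ Set.Icc (m - k) m :=
    fun x ⟨n, hn, hnm, hmn⟩ => ⟨n, hn, by omega, hnm⟩
  choose! g hgpos hgwin using hwin
  calc (windowBags pos k m).encard ≤ (Set.Icc (m - k) m).encard :=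
        Set.encard_le_encard_of_injOn hgwin fun x hx y hy hxy => by_contra fun hne =>
          Set.disjoint_left.mp (hdisj hne) (hgpos x hx) (hxy ▸ hgpos y hy)
    _ ≤ k + 1 := by
        rw [← Finset.coe_Icc, Set.encard_coe_eq_coe_finsetCard, Nat.card_Icc]
        exact_mod_cast (by omega : m + 1 - (m - k) ≤ k + 1)

theorem pathwidth_le_of_layout (hne : ∀ x, (pos x).Nonempty) (hconv : ∀ x, (pos x).OrdConnected)
    (hdisj : Pairwise (Disjoint on pos))
    (hadj : ∀ ⦃x y⦄, G.Adj x y → ∃ n ∈ pos x, ∃ n' ∈ pos y, n ≤ n' + k ∧ n' ≤ n + k) :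
    pathwidth G ≤ k :=
  sInf_le ⟨windowBags pos k, isPathDecomp_windowBags hne hconv hadj,
    encard_windowBags_le hdisj k⟩

end Layout

namespace SimpleGraph.Walk

variable {V : Type*} {G : SimpleGraph V} {u v : V}

lemma dist_getVert_getVert_of_length_eq_dist (p : G.Walk u v) (hp : p.length = G.dist u v)
    {i j : ℕ} (hij : i ≤ j) (hj : j ≤ p.length) :
    G.dist (p.getVert i) (p.getVert j) = j - i := by
  have hsub : ((p.take j).drop i).IsSubwalk p := (isSubwalk_drop _ i).trans (isSubwalk_take p j)
  have := length_eq_dist_of_subwalk hp hsub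
  rw [drop_length, take_length, take_getVert, min_eq_left hj, min_eq_right hij] at this
  exact this.symm

lemma intCast_dist_getVert_getVert_of_length_eq_dist (p : G.Walk u v)
    (hp : p.length = G.dist u v) {i j : ℕ} (hi : i ≤ p.length) (hj : j ≤ p.length) :
    (G.dist (p.getVert i) (p.getVert j) : ℤ) = |(i : ℤ) - j| := by
  rcases le_total i j with hij | hji
  · rw [p.dist_getVert_getVert_of_length_eq_dist hp hij hj, abs_sub_comm, abs_of_nonneg (by omega)]
    omega
  · rw [dist_comm, p.dist_getVert_getVert_of_length_eq_dist hp hji hi, abs_of_nonneg (by omega)]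
    omega

lemma abs_sub_eq_abs_sub_of_getVert_eq {a₁ b₁ a₂ b₂ : V} {P₁ : G.Walk a₁ b₁}
    {P₂ : G.Walk a₂ b₂} (h₁s : P₁.length = G.dist a₁ b₁) (h₂s : P₂.length = G.dist a₂ b₂)
    {i j i' j' : ℕ} (hi : i ≤ P₁.length) (hj : j ≤ P₂.length) (hi' : i' ≤ P₁.length)
    (hj' : j' ≤ P₂.length) (he : P₁.getVert i = P₂.getVert j)
    (he' : P₁.getVert i' = P₂.getVert j') :
    |(i : ℤ) - i'| = |(j : ℤ) - j'| := by
  rw [← P₁.intCast_dist_getVert_getVert_of_length_eq_dist h₁s hi hi',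
    ← P₂.intCast_dist_getVert_getVert_of_length_eq_dist h₂s hj hj', he, he']

end SimpleGraph.Walk

section TwoPaths

variable {V : Type*} {G : SimpleGraph V} {a₁ b₁ a₂ b₂ : V}
  (P₁ : G.Walk a₁ b₁) (P₂ : G.Walk a₂ b₂) (c₁ c₂ : ℕ) (f : V → ℕ)

def twoPathPos (x : V) : Set ℕ :=
  {n | (∃ i ≤ P₁.length, P₁.getVert i = x ∧ n = 2 * (i + c₁)) ∨
    (∃ j ≤ P₂.length, P₂.getVert j = x ∧ n = 2 * (j + c₂) + 1) ∨
    (x ∉ P₁.support ∧ x ∉ P₂.support ∧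
      n = 2 * (P₁.length + c₁ + P₂.length + c₂ + 1) + f x)}

lemma twoPathPos_nonempty (x : V) : (twoPathPos P₁ P₂ c₁ c₂ f x).Nonempty := by
  by_cases hx₁ : x ∈ P₁.support
  · obtain ⟨i, rfl, hi⟩ := Walk.mem_support_iff_exists_getVert.mp hx₁
    exact ⟨_, Or.inl ⟨i, hi, rfl, rfl⟩⟩
  by_cases hx₂ : x ∈ P₂.support
  · obtain ⟨j, rfl, hj⟩ := Walk.mem_support_iff_exists_getVert.mp hx₂
    exact ⟨_, Or.inr (Or.inl ⟨j, hj, rfl, rfl⟩)⟩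
  exact ⟨_, Or.inr (Or.inr ⟨hx₁, hx₂, rfl⟩)⟩

lemma twoPathPos_pairwise_disjoint {f : V → ℕ} (hf : Injective f) :
    Pairwise (Disjoint on twoPathPos P₁ P₂ c₁ c₂ f) := by
  refine fun x y hxy => Set.disjoint_left.mpr fun n hx hy => hxy ?_
  rcases hx with ⟨i, hi, rfl, rfl⟩ | ⟨j, hj, rfl, rfl⟩ | ⟨-, -, rfl⟩ <;>
  rcases hy with ⟨i', hi', rfl, hn⟩ | ⟨j', hj', rfl, hn⟩ | ⟨-, -, hn⟩ <;>
  first | omega | exact congrArg _ (by omega) | exact hf (by omega)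

variable {P₁ P₂ c₁ c₂}

lemma twoPathPos_ordConnected (h₁ : P₁.IsPath) (h₂ : P₂.IsPath)
    (halign : ∀ i j, i ≤ P₁.length → j ≤ P₂.length → P₁.getVert i = P₂.getVert j →
      i + c₁ = j + c₂) (x : V) :
    (twoPathPos P₁ P₂ c₁ c₂ f x).OrdConnected := by
  apply Set.ordConnected_of_forall_le_add_one
  rintro n (⟨i, hi, rfl, rfl⟩ | ⟨j, hj, rfl, rfl⟩ | ⟨hx₁, hx₂, rfl⟩)
    n' (⟨i', hi', hx, rfl⟩ | ⟨j', hj', hx, rfl⟩ | ⟨hy₁, hy₂, rfl⟩)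
  · have := h₁.getVert_injOn hi' hi hx; omega
  · have := halign i j' hi hj' hx.symm; omega
  · exact absurd (P₁.getVert_mem_support i) hy₁
  · have := halign i' j hi' hj hx; omega
  · have := h₂.getVert_injOn hj' hj hx; omega
  · exact absurd (P₂.getVert_mem_support j) hy₂
  · exact absurd (hx ▸ P₁.getVert_mem_support i') hx₁
  · exact absurd (hx ▸ P₂.getVert_mem_support j') hx₂
  · omega

lemma twoPathPos_adj (hcov : ∀ e ∈ G.edgeSet, e ∈ P₁.edges ∨ e ∈ P₂.edges)
    ⦃x y : V⦄ (hxy : G.Adj x y) :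
    ∃ n ∈ twoPathPos P₁ P₂ c₁ c₂ f x, ∃ n' ∈ twoPathPos P₁ P₂ c₁ c₂ f y,
      n ≤ n' + 2 ∧ n' ≤ n + 2 := by
  rcases hcov s(x, y) hxy with h | h
  · obtain ⟨i, hi, he⟩ := P₁.mk_mem_edges_iff_exists.mp h
    have hu : 2 * (i + c₁) ∈ twoPathPos P₁ P₂ c₁ c₂ f (P₁.getVert i) :=
      Or.inl ⟨i, hi.le, rfl, rfl⟩
    have hu' : 2 * (i + 1 + c₁) ∈ twoPathPos P₁ P₂ c₁ c₂ f (P₁.getVert (i + 1)) :=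
      Or.inl ⟨i + 1, hi, rfl, rfl⟩
    rcases Sym2.eq_iff.mp he with ⟨rfl, rfl⟩ | ⟨rfl, rfl⟩
    · exact ⟨_, hu, _, hu', by omega, by omega⟩
    · exact ⟨_, hu', _, hu, by omega, by omega⟩
  · obtain ⟨j, hj, he⟩ := P₂.mk_mem_edges_iff_exists.mp h
    have hv : 2 * (j + c₂) + 1 ∈ twoPathPos P₁ P₂ c₁ c₂ f (P₂.getVert j) :=
      Or.inr (Or.inl ⟨j, hj.le, rfl, rfl⟩)
    have hv' : 2 * (j + 1 + c₂) + 1 ∈ twoPathPos P₁ P₂ c₁ c₂ f (P₂.getVert (j + 1)) :=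
      Or.inr (Or.inl ⟨j + 1, hj, rfl, rfl⟩)
    rcases Sym2.eq_iff.mp he with ⟨rfl, rfl⟩ | ⟨rfl, rfl⟩
    · exact ⟨_, hv, _, hv', by omega, by omega⟩
    · exact ⟨_, hv', _, hv, by omega, by omega⟩

theorem pathwidth_le_two_of_aligned_paths [Countable V]
    (h₁ : P₁.IsPath) (h₂ : P₂.IsPath) (hcov : ∀ e ∈ G.edgeSet, e ∈ P₁.edges ∨ e ∈ P₂.edges)
    (halign : ∀ i j, i ≤ P₁.length → j ≤ P₂.length → P₁.getVert i = P₂.getVert j →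
      i + c₁ = j + c₂) :
    pathwidth G ≤ 2 := by
  obtain ⟨f, hf⟩ := exists_injective_nat V
  exact_mod_cast pathwidth_le_of_layout (twoPathPos_nonempty P₁ P₂ c₁ c₂ f)
    (twoPathPos_ordConnected f h₁ h₂ halign) (twoPathPos_pairwise_disjoint P₁ P₂ c₁ c₂ hf)
    (twoPathPos_adj f hcov)

end TwoPaths

theorem pathwidth_le_two_of_two_shortest_paths_general {V : Type*} [Finite V]
    (G : SimpleGraph V) {a₁ b₁ a₂ b₂ : V}
    (P₁ : G.Walk a₁ b₁) (P₂ : G.Walk a₂ b₂)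
    (h₁s : P₁.length = G.dist a₁ b₁) (h₂s : P₂.length = G.dist a₂ b₂)
    (hcov : ∀ e ∈ G.edgeSet, e ∈ P₁.edges ∨ e ∈ P₂.edges) :
    pathwidth G ≤ 2 := by
  have h₁ := P₁.isPath_of_length_eq_dist h₁s
  have h₂ := P₂.isPath_of_length_eq_dist h₂s
  rcases exists_translation_or_reflection_of_abs_sub_eq
      (R := fun i j => i ≤ P₁.length ∧ j ≤ P₂.length ∧ P₁.getVert i = P₂.getVert j)
      fun i j i' j' ⟨hi, hj, he⟩ ⟨hi', hj', he'⟩ =>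
        Walk.abs_sub_eq_abs_sub_of_getVert_eq h₁s h₂s hi hj hi' hj' he he'
    with ⟨c₁, c₂, htr⟩ | ⟨c, hrefl⟩
  · exact pathwidth_le_two_of_aligned_paths h₁ h₂ hcov fun i j hi hj he => htr i j ⟨hi, hj, he⟩
  · refine pathwidth_le_two_of_aligned_paths (c₁ := P₂.length) (c₂ := c) h₁ h₂.reverse
      (by simpa only [Walk.edges_reverse, List.mem_reverse] using hcov) fun i j hi hj he => ?_
    rw [Walk.length_reverse] at hj
    rw [Walk.getVert_reverse] at he
    have := hrefl i (P₂.length - j) ⟨hi, by omega, he⟩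
    omega

/-- Every graph whose edge set can be covered by two shortest paths has
pathwidth at most `2`. -/
theorem pathwidth_le_two_of_two_shortest_paths {V : Type*} [Finite V]
    (G : SimpleGraph V) {a₁ b₁ a₂ b₂ : V}
    (P₁ : G.Walk a₁ b₁) (P₂ : G.Walk a₂ b₂)
    (h₁ : P₁.IsPath) (h₂ : P₂.IsPath)
    (h₁s : P₁.length = G.dist a₁ b₁) (h₂s : P₂.length = G.dist a₂ b₂)
    (hcov : ∀ e ∈ G.edgeSet, e ∈ P₁.edges ∨ e ∈ P₂.edges) :
    pathwidth G ≤ 2 :=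
  pathwidth_le_two_of_two_shortest_paths_general G P₁ P₂ h₁s h₂s hcov
end

section
/- Let T_1 and T_2 be two trees with the same leaf set L, |L| >= 3, such that for every triple (a,b,c) of distinct leaves, denoting m_i(a,b,c) the median of a,b,c in T_i, we have d_{T_1}(m_1(a,b,c), x) = d_{T_2}(m_2(a,b,c), x) for each x in {a,b,c}. Then T_1 and T_2 are isomorphic via an isomorphism fixing every leaf. -/
/-- `m` is a median of `a`, `b`, `c` in `T`: it lies on a shortest path between
each pair among `a`, `b`, `c`. -/
def IsMedian {V : Type*} (T : SimpleGraph V) (a b c m : V) : Prop :=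
  T.dist a m + T.dist m b = T.dist a b ∧
  T.dist b m + T.dist m c = T.dist b c ∧
  T.dist a m + T.dist m c = T.dist a c

open SimpleGraph

namespace TreeMedianAux

variable {V : Type*} {T : SimpleGraph V}

/-- In an acyclic graph, every path realizes the distance between its endpoints. -/
lemma length_eq_dist (ha : T.IsAcyclic) {a b : V} {p : T.Walk a b} (hp : p.IsPath) :
    p.length = T.dist a b := by
  obtain ⟨q, hq, hql⟩ := (p.reachable).exists_path_of_dist
  have h := ha.path_unique ⟨p, hp⟩ ⟨q, hq⟩
  have : p = q := congrArg Subtype.val h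
  rw [this, hql]

lemma dist_getVert (hc : T.Connected) (ha : T.IsAcyclic) {a b : V} {p : T.Walk a b}
    (hp : p.IsPath) {k : ℕ} (hk : k ≤ p.length) :
    T.dist a (p.getVert k) = k ∧ T.dist (p.getVert k) b = p.length - k := by
  induction p generalizing k with
  | nil =>
    have : k = 0 := by simpa using hk
    subst this
    simp
  | @cons a a' b h q ih =>
    rcases Walk.cons_isPath_iff _ _ |>.mp hp with ⟨hq, hnotmem⟩
    rcases k with _ | k
    · refine ⟨by simp, ?_⟩
      simp only [Walk.getVert_zero, Nat.sub_zero]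
      exact (length_eq_dist ha hp).symm
    · have hk' : k ≤ q.length := by simpa [Walk.length_cons] using hk
      obtain ⟨h1, h2⟩ := ih hq hk'
      set m := q.getVert k with hm
      have hgv : (Walk.cons h q).getVert (k+1) = m := rfl
      rw [hgv]
      have hd1 : T.dist a a' = 1 := dist_eq_one_iff_adj.mpr h
      have htri : T.dist a m ≤ T.dist a a' + T.dist a' m := hc.dist_triangle
      have htri2 : T.dist a b ≤ T.dist a m + T.dist m b := hc.dist_triangle
      have hab : T.dist a b = q.length + 1 := by
        rw [← length_eq_dist ha hp]; simp [Walk.length_cons]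
      constructor
      · omega
      · have : T.dist m b = q.length - k := h2
        simpa [Walk.length_cons] using this

/-- A vertex between `a` and `b` is the vertex at position `dist a m` on any path `a → b`. -/
lemma eq_getVert_of_between (hc : T.Connected) (ha : T.IsAcyclic) {a b m : V}
    (h : T.dist a m + T.dist m b = T.dist a b)
    {p : T.Walk a b} (hp : p.IsPath) : m = p.getVert (T.dist a m) := by
  obtain ⟨pa, hpa, hpal⟩ := (hc a m).exists_path_of_dist
  obtain ⟨pm, hpm, hpml⟩ := (hc m b).exists_path_of_dist
  have hlen : (pa.append pm).length = T.dist a b := by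
    rw [Walk.length_append, hpal, hpml, h]
  have hW : (pa.append pm).IsPath := Walk.isPath_of_length_eq_dist _ hlen
  have hPeq : pa.append pm = p := by
    have := ha.path_unique ⟨pa.append pm, hW⟩ ⟨p, hp⟩
    exact congrArg Subtype.val this
  have hmem : m ∈ p.support := by
    rw [← hPeq]
    exact Walk.mem_support_append_iff _ _ |>.mpr (Or.inl (Walk.end_mem_support pa))
  obtain ⟨n, hn, hnle⟩ := Walk.mem_support_iff_exists_getVert.mp hmem
  have := (dist_getVert hc ha hp hnle).1
  rw [hn] at this
  rw [this, hn]

lemma between_unique (hc : T.Connected) (ha : T.IsAcyclic) {a b m m' : V}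
    (h : T.dist a m + T.dist m b = T.dist a b)
    (h' : T.dist a m' + T.dist m' b = T.dist a b)
    (heq : T.dist a m = T.dist a m') : m = m' := by
  obtain ⟨p, hp, -⟩ := (hc a b).exists_path_of_dist
  rw [eq_getVert_of_between hc ha h hp, eq_getVert_of_between hc ha h' hp, heq]

/-- Betweenness chain: if `x` and `y` both lie between `a` and `b`, with `x` closer to `a`,
then `x` lies between `a` and `y`. -/
lemma between_chain (hc : T.Connected) (ha : T.IsAcyclic) {a b x y : V}
    (hx : T.dist a x + T.dist x b = T.dist a b)
    (hy : T.dist a y + T.dist y b = T.dist a b)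
    (hij : T.dist a x ≤ T.dist a y) :
    T.dist a x + T.dist x y = T.dist a y := by
  classical
  obtain ⟨p, hp, hpl⟩ := (hc a b).exists_path_of_dist
  have hxg := eq_getVert_of_between hc ha hx hp
  have hyg := eq_getVert_of_between hc ha hy hp
  set i := T.dist a x with hi
  set j := T.dist a y with hj
  have hjle : j ≤ p.length := by
    rw [hpl, ← hy]; omega
  have hymem : y ∈ p.support := by
    rw [hyg]; exact Walk.mem_support_iff_exists_getVert.mpr ⟨j, rfl, hjle⟩
  -- split the path at y
  have hq : (p.takeUntil y hymem).IsPath := hp.takeUntil hymem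
  have hr : (p.dropUntil y hymem).IsPath := hp.dropUntil hymem
  have hql : (p.takeUntil y hymem).length = j := by
    rw [length_eq_dist ha hq, hj]
  have hxmem : x ∈ (p.takeUntil y hymem).support ∨ x ∈ (p.dropUntil y hymem).support := by
    have : x ∈ p.support := by
      rw [hxg]
      exact Walk.mem_support_iff_exists_getVert.mpr ⟨i, rfl, by rw [hpl, ← hx]; omega⟩
    rw [← Walk.take_spec p hymem] at this
    exact (Walk.mem_support_append_iff _ _).mp this
  rcases hxmem with hmem | hmem
  · obtain ⟨n, hn, hnle⟩ := Walk.mem_support_iff_exists_getVert.mp hmem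
    obtain ⟨h1, h2⟩ := dist_getVert hc ha hq hnle
    rw [hn] at h1 h2
    rw [hql] at h2
    have : n = i := by rw [← h1, hi]
    omega
  · obtain ⟨n, hn, hnle⟩ := Walk.mem_support_iff_exists_getVert.mp hmem
    obtain ⟨h1, h2⟩ := dist_getVert hc ha hr hnle
    rw [hn] at h1 h2
    have hrl : (p.dropUntil y hymem).length = T.dist y b := length_eq_dist ha hr
    rw [hrl] at h2 hnle
    -- dist a x = i, dist y x = n, dist x b = dist y b - n
    have htri : T.dist a x ≤ T.dist a y + T.dist y x := hc.dist_triangle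
    have htri2 : T.dist x y = T.dist y x := dist_comm ..
    -- from hx : i + dist x b = dist a b = j + dist y b
    omega

/-- Pure metric composition: `a—x—m` and `a—m—c` betweenness give `x—m—c` and `a—x—c`. -/
lemma between_trans (hc : T.Connected) {a x m c : V}
    (h1 : T.dist a x + T.dist x m = T.dist a m)
    (h2 : T.dist a m + T.dist m c = T.dist a c) :
    T.dist x m + T.dist m c = T.dist x c ∧ T.dist a x + T.dist x c = T.dist a c := by
  have t1 : T.dist x c ≤ T.dist x m + T.dist m c := hc.dist_triangle
  have t2 : T.dist a c ≤ T.dist a x + T.dist x c := hc.dist_triangle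
  omega

lemma between_trans' (hc : T.Connected) {b m v c : V}
    (h1 : T.dist b m + T.dist m c = T.dist b c)
    (h2 : T.dist m v + T.dist v c = T.dist m c) :
    T.dist b m + T.dist m v = T.dist b v := by
  have t1 : T.dist b v ≤ T.dist b m + T.dist m v := hc.dist_triangle
  have t2 : T.dist b c ≤ T.dist b v + T.dist v c := hc.dist_triangle
  have t3 : T.dist b v + T.dist v c ≤ T.dist b m + T.dist m v + T.dist v c := by omega
  omega

/-- Existence of a median of three vertices in a finite tree. -/
lemma exists_median [Finite V] (hc : T.Connected) (ha : T.IsAcyclic) (a b c : V) :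
    ∃ m, IsMedian T a b c m := by
  classical
  obtain ⟨p, hp, hpl⟩ := (hc b c).exists_path_of_dist
  obtain ⟨k₀, hk₀mem, hk₀min⟩ := Finset.exists_min_image (Finset.range (p.length + 1))
    (fun k => T.dist a (p.getVert k)) ⟨0, by simp⟩
  set m := p.getVert k₀ with hm
  have hk₀le : k₀ ≤ p.length := by have := Finset.mem_range.mp hk₀mem; omega
  obtain ⟨hbm, hmc⟩ := dist_getVert hc ha hp hk₀le
  have hmin : ∀ x ∈ p.support, T.dist a m ≤ T.dist a x := by
    intro x hx
    obtain ⟨n, hn, hnle⟩ := Walk.mem_support_iff_exists_getVert.mp hx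
    rw [← hn]
    exact hk₀min n (Finset.mem_range.mpr (by omega))
  have hmmem : m ∈ p.support := Walk.mem_support_iff_exists_getVert.mpr ⟨k₀, rfl, hk₀le⟩
  obtain ⟨q, hq, hql⟩ := (hc a m).exists_path_of_dist
  -- key step: `dist a m + dist m z = dist a z` for a path `m → z` inside `p`.
  have key : ∀ (z : V) (r : T.Walk m z), r.IsPath → (∀ x ∈ r.support, x ∈ p.support) →
      T.dist a m + T.dist m z = T.dist a z := by
    intro z r hrp hrsub
    have hdisj : ∀ x ∈ q.support, x ∈ r.support.tail → False := by
      intro x hxq hxr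
      have hxr' : x ∈ r.support := List.mem_of_mem_tail hxr
      obtain ⟨n, hn, hnle⟩ := Walk.mem_support_iff_exists_getVert.mp hxq
      have h1 := (dist_getVert hc ha hq hnle).1
      rw [hn] at h1
      have hge : T.dist a m ≤ T.dist a x := hmin x (hrsub x hxr')
      have : n = q.length := by rw [hql] at hnle ⊢; omega
      have hxm : x = m := by rw [← hn, this, Walk.getVert_length]
      subst hxm
      have : r.support = m :: r.support.tail := Walk.support_eq_cons r
      have hnd : r.support.Nodup := hrp.support_nodup
      rw [this] at hnd
      exact (List.nodup_cons.mp hnd).1 hxr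
    have hW : (q.append r).IsPath := by
      rw [Walk.isPath_def, Walk.support_append]
      refine List.Nodup.append hq.support_nodup (hrp.support_nodup.tail) ?_
      intro x hx1 hx2
      exact hdisj x hx1 hx2
    have := length_eq_dist ha hW
    rw [Walk.length_append, hql, length_eq_dist ha hrp] at this
    exact this
  have h1 : T.dist a m + T.dist m b = T.dist a b := by
    refine key b (p.takeUntil m hmmem).reverse ((hp.takeUntil hmmem).reverse) ?_
    intro x hx
    rw [Walk.support_reverse, List.mem_reverse] at hx
    exact Walk.support_takeUntil_subset p hmmem hx
  have h2 : T.dist a m + T.dist m c = T.dist a c := by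
    refine key c (p.dropUntil m hmmem) (hp.dropUntil hmmem) ?_
    intro x hx
    exact Walk.support_dropUntil_subset p hmmem hx
  rw [← hm] at hbm hmc
  refine ⟨m, h1, ?_, h2⟩
  omega

lemma exists_adj (hc : T.Connected) (hV : Nontrivial V) (b : V) : ∃ w, T.Adj b w := by
  obtain ⟨v', hv'⟩ := exists_ne b
  obtain ⟨p, hp, hpl⟩ := (hc b v').exists_path_of_dist
  have hpos : 0 < p.length := by
    rw [hpl]
    exact hc.pos_dist_of_ne (Ne.symm hv')
  have := p.adj_getVert_succ hpos
  rw [Walk.getVert_zero] at this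
  exact ⟨_, this⟩

lemma exists_neighbor_farther [Finite V] (hc : T.Connected) (ha : T.IsAcyclic)
    (hV : Nontrivial V) (u b : V) (hnotleaf : (T.neighborSet b).ncard ≠ 1) :
    ∃ w, T.Adj b w ∧ T.dist u w = T.dist u b + 1 := by
  classical
  rcases eq_or_ne u b with rfl | hub
  · obtain ⟨w, hw⟩ := exists_adj hc hV u
    exact ⟨w, hw, by rw [dist_eq_one_iff_adj.mpr hw, SimpleGraph.dist_self]⟩
  · have hne : (T.neighborSet b).Nonempty := by
      obtain ⟨w, hw⟩ := exists_adj hc hV b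
      exact ⟨w, hw⟩
    have hfin : (T.neighborSet b).Finite := Set.toFinite _
    have h2 : 1 < (T.neighborSet b).ncard := by
      rcases Nat.lt_or_ge (T.neighborSet b).ncard 1 with h | h
      · exfalso
        have := (Set.ncard_pos hfin).mpr hne
        omega
      · omega
    obtain ⟨w₁, w₂, hw₁, hw₂, hww⟩ := (Set.one_lt_ncard_iff hfin).mp h2
    obtain ⟨p, hp, hpl⟩ := (hc u b).exists_path_of_dist
    set d := T.dist u b with hd
    have hdpos : 0 < d := hc.pos_dist_of_ne hub
    obtain ⟨w, hwadj, hwpred⟩ : ∃ w, T.Adj b w ∧ w ≠ p.getVert (d - 1) := by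
      rcases eq_or_ne w₁ (p.getVert (d - 1)) with h | h
      · exact ⟨w₂, hw₂, fun h2 => hww (h.trans h2.symm)⟩
      · exact ⟨w₁, hw₁, h⟩
    have hwb : w ≠ b := fun h => T.irrefl (h ▸ hwadj)
    have hns : w ∉ p.support := by
      intro hmem
      obtain ⟨n, hn, hnle⟩ := Walk.mem_support_iff_exists_getVert.mp hmem
      obtain ⟨h1, h2⟩ := dist_getVert hc ha hp hnle
      rw [hn] at h1 h2
      have hwb1 : T.dist w b = 1 := dist_eq_one_iff_adj.mpr hwadj.symm
      have : n = d - 1 := by omega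
      exact hwpred (by rw [← hn, this])
    have hW : (p.append (Walk.cons hwadj Walk.nil)).IsPath := by
      rw [Walk.isPath_def, Walk.support_append, Walk.support_cons, Walk.support_nil]
      simp only [List.tail_cons]
      refine List.Nodup.append hp.support_nodup (by simp) ?_
      intro x hx1 hx2
      simp only [List.mem_singleton] at hx2
      subst hx2
      exact hns hx1
    refine ⟨w, hwadj, ?_⟩
    have := length_eq_dist ha hW
    rw [Walk.length_append, Walk.length_cons, Walk.length_nil, hpl] at this
    omega

lemma exists_leaf_beyond [Finite V] (hc : T.Connected) (ha : T.IsAcyclic)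
    (hV : Nontrivial V) (u v : V) :
    ∃ x, (T.neighborSet x).ncard = 1 ∧ T.dist u v + T.dist v x = T.dist u x := by
  classical
  have : Fintype V := Fintype.ofFinite V
  obtain ⟨b, hbS, hbmax⟩ := Finset.exists_max_image
    (Finset.univ.filter (fun x => T.dist u v + T.dist v x = T.dist u x)) (T.dist u)
    ⟨v, by simp⟩
  rw [Finset.mem_filter] at hbS
  by_cases hleaf : (T.neighborSet b).ncard = 1
  · exact ⟨b, hleaf, hbS.2⟩
  · exfalso
    obtain ⟨w, hwadj, hw⟩ := exists_neighbor_farther hc ha hV u b hleaf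
    have t1 : T.dist v w ≤ T.dist v b + T.dist b w := hc.dist_triangle
    have t2 : T.dist u w ≤ T.dist u v + T.dist v w := hc.dist_triangle
    have hbw : T.dist b w = 1 := dist_eq_one_iff_adj.mpr hwadj
    have hmem : T.dist u v + T.dist v w = T.dist u w := by omega
    have := hbmax w (Finset.mem_filter.mpr ⟨Finset.mem_univ _, hmem⟩)
    omega

/-- If `u` lies between `r` and `b` at distance at most that of the median-like point `m`,
then `u` also lies between `r` and `c`. -/
lemma between_of_le_median (hc : T.Connected) (ha : T.IsAcyclic) {r b c u m : V}
    (hu : T.dist r u + T.dist u b = T.dist r b)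
    (hm1 : T.dist r m + T.dist m b = T.dist r b)
    (hm3 : T.dist r m + T.dist m c = T.dist r c)
    (hik : T.dist r u ≤ T.dist r m) :
    T.dist r u + T.dist u c = T.dist r c := by
  have h1 := between_chain hc ha hu hm1 hik
  exact (between_trans hc h1 hm3).2

/-- Distance between two points on a common geodesic from `r` to `c`. -/
lemma dist_of_between (hc : T.Connected) (ha : T.IsAcyclic) {r c u v : V}
    (hu : T.dist r u + T.dist u c = T.dist r c)
    (hv : T.dist r v + T.dist v c = T.dist r c) :
    T.dist u v = max (T.dist r u) (T.dist r v) - min (T.dist r u) (T.dist r v) := by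
  rcases le_total (T.dist r u) (T.dist r v) with h | h
  · have := between_chain hc ha hu hv h
    omega
  · have := between_chain hc ha hv hu h
    have hcomm : T.dist u v = T.dist v u := dist_comm ..
    omega

/-- Distance between points beyond the median on two different branches. -/
lemma dist_of_beyond (hc : T.Connected) (ha : T.IsAcyclic) {r b c u v m : V}
    (hu : T.dist r u + T.dist u b = T.dist r b)
    (hv : T.dist r v + T.dist v c = T.dist r c)
    (hm1 : T.dist r m + T.dist m b = T.dist r b)
    (hm2 : T.dist b m + T.dist m c = T.dist b c)
    (hm3 : T.dist r m + T.dist m c = T.dist r c)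
    (hki : T.dist r m ≤ T.dist r u)
    (hkj : T.dist r m ≤ T.dist r v) :
    T.dist u v = (T.dist r u - T.dist r m) + (T.dist r v - T.dist r m) := by
  have hmu := between_chain hc ha hm1 hu hki
  have hmv := between_chain hc ha hm3 hv hkj
  have hmvc := (between_trans hc hmv hv).1
  have hbmv := between_trans' hc hm2 hmvc
  have hmub := (between_trans hc hmu hu).1
  have tri : T.dist u v ≤ T.dist u m + T.dist m v := hc.dist_triangle
  have tri2 : T.dist b v ≤ T.dist b u + T.dist u v := hc.dist_triangle
  have c1 : T.dist u m = T.dist m u := dist_comm ..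
  have c2 : T.dist b u = T.dist u b := dist_comm ..
  have c3 : T.dist b m = T.dist m b := dist_comm ..
  omega

section Master

variable {V₁ V₂ L : Type*} [Finite V₁] [Finite V₂]
    {T₁ : SimpleGraph V₁} {T₂ : SimpleGraph V₂}
    {i₁ : L ↪ V₁} {i₂ : L ↪ V₂}

/-- The key transfer lemma: matched points on matched leaf-geodesics are at equal distances. -/
lemma master (h₁ : T₁.IsTree) (h₂ : T₂.IsTree)
    (hmed : ∀ a b c : L, a ≠ b → b ≠ c → a ≠ c →
      ∀ m₁ m₂, IsMedian T₁ (i₁ a) (i₁ b) (i₁ c) m₁ →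
        IsMedian T₂ (i₂ a) (i₂ b) (i₂ c) m₂ →
        T₁.dist m₁ (i₁ a) = T₂.dist m₂ (i₂ a) ∧
        T₁.dist m₁ (i₁ b) = T₂.dist m₂ (i₂ b) ∧
        T₁.dist m₁ (i₁ c) = T₂.dist m₂ (i₂ c))
    (r b c : L) (hb : b ≠ r) (hc : c ≠ r)
    {u v : V₁} {u' v' : V₂}
    (hu : T₁.dist (i₁ r) u + T₁.dist u (i₁ b) = T₁.dist (i₁ r) (i₁ b))
    (hv : T₁.dist (i₁ r) v + T₁.dist v (i₁ c) = T₁.dist (i₁ r) (i₁ c))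
    (hu' : T₂.dist (i₂ r) u' + T₂.dist u' (i₂ b) = T₂.dist (i₂ r) (i₂ b))
    (hv' : T₂.dist (i₂ r) v' + T₂.dist v' (i₂ c) = T₂.dist (i₂ r) (i₂ c))
    (hpu : T₂.dist (i₂ r) u' = T₁.dist (i₁ r) u)
    (hpv : T₂.dist (i₂ r) v' = T₁.dist (i₁ r) v) :
    T₂.dist u' v' = T₁.dist u v := by
  obtain ⟨hc₁, ha₁⟩ := h₁
  obtain ⟨hc₂, ha₂⟩ := h₂
  rcases eq_or_ne b c with rfl | hbc
  · rw [dist_of_between hc₁ ha₁ hu hv, dist_of_between hc₂ ha₂ hu' hv', hpu, hpv]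
  · obtain ⟨m, hm1, hm2, hm3⟩ := exists_median hc₁ ha₁ (i₁ r) (i₁ b) (i₁ c)
    obtain ⟨n, hn1, hn2, hn3⟩ := exists_median hc₂ ha₂ (i₂ r) (i₂ b) (i₂ c)
    obtain ⟨e1, e2, e3⟩ := hmed r b c hb.symm hbc hc.symm m n ⟨hm1, hm2, hm3⟩ ⟨hn1, hn2, hn3⟩
    have ek : T₂.dist (i₂ r) n = T₁.dist (i₁ r) m := by
      have q1 : T₂.dist (i₂ r) n = T₂.dist n (i₂ r) := SimpleGraph.dist_comm
      have q2 : T₁.dist (i₁ r) m = T₁.dist m (i₁ r) := SimpleGraph.dist_comm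
      omega
    rcases le_or_gt (T₁.dist (i₁ r) u) (T₁.dist (i₁ r) m) with hik | hik
    · -- u is on the common part: it lies between r and c as well
      have hu2 := between_of_le_median hc₁ ha₁ hu hm1 hm3 hik
      have hu2' := between_of_le_median hc₂ ha₂ hu' hn1 hn3 (by rw [hpu, ek]; exact hik)
      rw [dist_of_between hc₁ ha₁ hu2 hv, dist_of_between hc₂ ha₂ hu2' hv', hpu, hpv]
    · rcases le_or_gt (T₁.dist (i₁ r) v) (T₁.dist (i₁ r) m) with hjk | hjk
      · -- v is on the common part: it lies between r and b as well
        have hm2' : T₁.dist (i₁ c) m + T₁.dist m (i₁ b) = T₁.dist (i₁ c) (i₁ b) := by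
          have q1 : T₁.dist (i₁ c) m = T₁.dist m (i₁ c) := SimpleGraph.dist_comm
          have q2 : T₁.dist m (i₁ b) = T₁.dist (i₁ b) m := SimpleGraph.dist_comm
          have q3 : T₁.dist (i₁ c) (i₁ b) = T₁.dist (i₁ b) (i₁ c) := SimpleGraph.dist_comm
          omega
        have hn2' : T₂.dist (i₂ c) n + T₂.dist n (i₂ b) = T₂.dist (i₂ c) (i₂ b) := by
          have q1 : T₂.dist (i₂ c) n = T₂.dist n (i₂ c) := SimpleGraph.dist_comm
          have q2 : T₂.dist n (i₂ b) = T₂.dist (i₂ b) n := SimpleGraph.dist_comm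
          have q3 : T₂.dist (i₂ c) (i₂ b) = T₂.dist (i₂ b) (i₂ c) := SimpleGraph.dist_comm
          omega
        have hv2 := between_of_le_median hc₁ ha₁ hv hm3 hm1 hjk
        have hv2' := between_of_le_median hc₂ ha₂ hv' hn3 hn1 (by rw [hpv, ek]; exact hjk)
        rw [dist_of_between hc₁ ha₁ hu hv2, dist_of_between hc₂ ha₂ hu' hv2', hpu, hpv]
      · rw [dist_of_beyond hc₁ ha₁ hu hv hm1 hm2 hm3 (le_of_lt hik) (le_of_lt hjk),
          dist_of_beyond hc₂ ha₂ hu' hv' hn1 hn2 hn3 (by rw [hpu, ek]; exact le_of_lt hik)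
            (by rw [hpv, ek]; exact le_of_lt hjk), hpu, hpv, ek]

end Master

end TreeMedianAux

open TreeMedianAux in
/-- Two trees with the same leaf set `L`, `|L| ≥ 3`, realizing the same median
distance data on every triple of distinct leaves, are isomorphic via an
isomorphism fixing every leaf. -/
theorem tree_determined_by_median_data {V₁ V₂ L : Type*} [Finite V₁] [Finite V₂]
    (T₁ : SimpleGraph V₁) (T₂ : SimpleGraph V₂)
    (h₁ : T₁.IsTree) (h₂ : T₂.IsTree)
    (i₁ : L ↪ V₁) (i₂ : L ↪ V₂)
    (hL₁ : Set.range i₁ = {v | (T₁.neighborSet v).ncard = 1})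
    (hL₂ : Set.range i₂ = {v | (T₂.neighborSet v).ncard = 1})
    (hcard : 3 ≤ Nat.card L)
    (hmed : ∀ a b c : L, a ≠ b → b ≠ c → a ≠ c →
      ∀ m₁ m₂, IsMedian T₁ (i₁ a) (i₁ b) (i₁ c) m₁ →
        IsMedian T₂ (i₂ a) (i₂ b) (i₂ c) m₂ →
        T₁.dist m₁ (i₁ a) = T₂.dist m₂ (i₂ a) ∧
        T₁.dist m₁ (i₁ b) = T₂.dist m₂ (i₂ b) ∧
        T₁.dist m₁ (i₁ c) = T₂.dist m₂ (i₂ c)) :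
    ∃ φ : T₁ ≃g T₂, ∀ l : L, φ (i₁ l) = i₂ l := by
  classical
  obtain ⟨hc₁, ha₁⟩ := id h₁
  obtain ⟨hc₂, ha₂⟩ := id h₂
  -- basic facts about `L`
  have hLfin : Finite L := (Nat.card_pos_iff.mp (by omega)).2
  have hLne : Nonempty L := (Nat.card_pos_iff.mp (by omega)).1
  have := Fintype.ofFinite L
  obtain ⟨r⟩ := hLne
  -- a third leaf always exists
  have third : ∀ a b : L, ∃ c : L, c ≠ a ∧ c ≠ b := by
    intro a b
    by_contra hcon
    push_neg at hcon
    have hsub : (Finset.univ : Finset L) ⊆ {a, b} := by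
      intro x _
      rcases eq_or_ne x a with rfl | hxa
      · simp
      · simp [hcon x hxa]
    have hle := Finset.card_le_card hsub
    have h2 : ({a, b} : Finset L).card ≤ 2 :=
      (Finset.card_insert_le _ _).trans (by simp)
    rw [Nat.card_eq_fintype_card, ← Finset.card_univ] at hcard
    omega
  obtain ⟨l₂, hl2, -⟩ := third r r
  have hV₁ : Nontrivial V₁ := ⟨i₁ l₂, i₁ r, fun h => hl2 (i₁.injective h)⟩
  have hV₂ : Nontrivial V₂ := ⟨i₂ l₂, i₂ r, fun h => hl2 (i₂.injective h)⟩
  -- leaf distances agree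
  have LD : ∀ a b : L, a ≠ b → T₁.dist (i₁ a) (i₁ b) = T₂.dist (i₂ a) (i₂ b) := by
    intro a b hab
    obtain ⟨c, hca, hcb⟩ := third a b
    obtain ⟨m, hm1, hm2, hm3⟩ := exists_median hc₁ ha₁ (i₁ a) (i₁ b) (i₁ c)
    obtain ⟨n, hn1, hn2, hn3⟩ := exists_median hc₂ ha₂ (i₂ a) (i₂ b) (i₂ c)
    obtain ⟨e1, e2, e3⟩ := hmed a b c hab (Ne.symm hcb) (Ne.symm hca) m n
      ⟨hm1, hm2, hm3⟩ ⟨hn1, hn2, hn3⟩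
    have q1 : T₁.dist (i₁ a) m = T₁.dist m (i₁ a) := SimpleGraph.dist_comm
    have q2 : T₂.dist (i₂ a) n = T₂.dist n (i₂ a) := SimpleGraph.dist_comm
    omega
  -- every vertex lies on a geodesic from the root leaf `r` to another leaf
  have hchoose₁ : ∀ v : V₁, ∃ b : L, b ≠ r ∧
      T₁.dist (i₁ r) v + T₁.dist v (i₁ b) = T₁.dist (i₁ r) (i₁ b) := by
    intro v
    obtain ⟨x, hxleaf, hxbet⟩ := exists_leaf_beyond hc₁ ha₁ hV₁ (i₁ r) v
    have hxmem : x ∈ Set.range i₁ := by rw [hL₁]; exact hxleaf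
    obtain ⟨b, rfl⟩ := hxmem
    rcases eq_or_ne b r with heq | hbr
    · subst heq
      have hv0 : T₁.dist (i₁ b) v = 0 := by
        have hds : T₁.dist (i₁ b) (i₁ b) = 0 := SimpleGraph.dist_self
        have hcm : T₁.dist v (i₁ b) = T₁.dist (i₁ b) v := SimpleGraph.dist_comm
        omega
      have hvr : v = i₁ b := ((hc₁.dist_eq_zero_iff).mp hv0).symm
      obtain ⟨s, hs, -⟩ := third b b
      refine ⟨s, hs, ?_⟩
      rw [hvr]
      rw [SimpleGraph.dist_self, zero_add]
    · exact ⟨b, hbr, hxbet⟩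
  have hchoose₂ : ∀ w : V₂, ∃ c : L, c ≠ r ∧
      T₂.dist (i₂ r) w + T₂.dist w (i₂ c) = T₂.dist (i₂ r) (i₂ c) := by
    intro w
    obtain ⟨x, hxleaf, hxbet⟩ := exists_leaf_beyond hc₂ ha₂ hV₂ (i₂ r) w
    have hxmem : x ∈ Set.range i₂ := by rw [hL₂]; exact hxleaf
    obtain ⟨c, rfl⟩ := hxmem
    rcases eq_or_ne c r with heq | hcr
    · subst heq
      have hv0 : T₂.dist (i₂ c) w = 0 := by
        have hds : T₂.dist (i₂ c) (i₂ c) = 0 := SimpleGraph.dist_self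
        have hcm : T₂.dist w (i₂ c) = T₂.dist (i₂ c) w := SimpleGraph.dist_comm
        omega
      have hvr : w = i₂ c := ((hc₂.dist_eq_zero_iff).mp hv0).symm
      obtain ⟨s, hs, -⟩ := third c c
      refine ⟨s, hs, ?_⟩
      rw [hvr]
      rw [SimpleGraph.dist_self, zero_add]
    · exact ⟨c, hcr, hxbet⟩
  -- the map
  set pick : V₁ → L := fun v => (hchoose₁ v).choose with hpick
  have hpickne : ∀ v, pick v ≠ r := fun v => (hchoose₁ v).choose_spec.1
  have hpickbet : ∀ v, T₁.dist (i₁ r) v + T₁.dist v (i₁ (pick v)) =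
      T₁.dist (i₁ r) (i₁ (pick v)) := fun v => (hchoose₁ v).choose_spec.2
  set path₂ : (b : L) → T₂.Walk (i₂ r) (i₂ b) :=
    fun b => ((hc₂.exists_path_of_dist (i₂ r) (i₂ b))).choose with hpath₂
  have hpath₂p : ∀ b, (path₂ b).IsPath := fun b => (hc₂.exists_path_of_dist _ _).choose_spec.1
  have hpath₂l : ∀ b, (path₂ b).length = T₂.dist (i₂ r) (i₂ b) :=
    fun b => (hc₂.exists_path_of_dist _ _).choose_spec.2
  -- generic image point on the T₂-side geodesic to leaf `b`
  have himg : ∀ (b : L), b ≠ r → ∀ k, k ≤ T₁.dist (i₁ r) (i₁ b) →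
      T₂.dist (i₂ r) ((path₂ b).getVert k) = k ∧
      T₂.dist (i₂ r) ((path₂ b).getVert k) + T₂.dist ((path₂ b).getVert k) (i₂ b) =
        T₂.dist (i₂ r) (i₂ b) := by
    intro b hbr k hk
    have hk2 : k ≤ (path₂ b).length := by
      rw [hpath₂l b, ← LD r b (Ne.symm hbr)]; exact hk
    obtain ⟨hh1, hh2⟩ := dist_getVert hc₂ ha₂ (hpath₂p b) hk2
    refine ⟨hh1, ?_⟩
    rw [hh1, hh2, ← hpath₂l b]
    omega
  set f : V₁ → V₂ := fun v => (path₂ (pick v)).getVert (T₁.dist (i₁ r) v) with hf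
  have hfbet : ∀ v, T₂.dist (i₂ r) (f v) + T₂.dist (f v) (i₂ (pick v)) =
      T₂.dist (i₂ r) (i₂ (pick v)) := by
    intro v
    exact (himg (pick v) (hpickne v) _ (by have := hpickbet v; omega)).2
  have hfpos : ∀ v, T₂.dist (i₂ r) (f v) = T₁.dist (i₁ r) v := by
    intro v
    exact (himg (pick v) (hpickne v) _ (by have := hpickbet v; omega)).1
  -- f preserves distances
  have key : ∀ u v : V₁, T₂.dist (f u) (f v) = T₁.dist u v := by
    intro u v
    exact master h₁ h₂ hmed r (pick u) (pick v) (hpickne u) (hpickne v)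
      (hpickbet u) (hpickbet v) (hfbet u) (hfbet v) (hfpos u) (hfpos v)
  have hinj : Function.Injective f := by
    intro u v h
    have : T₂.dist (f u) (f v) = 0 := by rw [h]; exact SimpleGraph.dist_self
    rw [key] at this
    exact (hc₁.dist_eq_zero_iff).mp this
  have hsurj : Function.Surjective f := by
    intro w
    obtain ⟨c, hcr, hwbet⟩ := hchoose₂ w
    obtain ⟨p₁, hp₁, hp₁l⟩ := hc₁.exists_path_of_dist (i₁ r) (i₁ c)
    set j := T₂.dist (i₂ r) w with hj
    have hjle : j ≤ p₁.length := by
      rw [hp₁l, LD r c (Ne.symm hcr)]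
      omega
    set v := p₁.getVert j with hv
    obtain ⟨hv1, hv2⟩ := dist_getVert hc₁ ha₁ hp₁ hjle
    rw [← hv] at hv1 hv2
    have hvbet : T₁.dist (i₁ r) v + T₁.dist v (i₁ c) = T₁.dist (i₁ r) (i₁ c) := by
      rw [hv1, hv2, ← hp₁l]; omega
    refine ⟨v, ?_⟩
    have := master h₁ h₂ hmed r (pick v) c (hpickne v) hcr
      (hpickbet v) hvbet (hfbet v) hwbet (hfpos v) (by rw [← hj, hv1])
    rw [SimpleGraph.dist_self] at this
    exact ((hc₂.dist_eq_zero_iff).mp this)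
  let e : V₁ ≃ V₂ := Equiv.ofBijective f ⟨hinj, hsurj⟩
  refine ⟨⟨e, ?_⟩, ?_⟩
  · intro a b
    show T₂.Adj (f a) (f b) ↔ T₁.Adj a b
    rw [← SimpleGraph.dist_eq_one_iff_adj, ← SimpleGraph.dist_eq_one_iff_adj, key]
  · intro l
    show f (i₁ l) = i₂ l
    rcases eq_or_ne l r with heq | hlr
    · subst heq
      have h0 : T₂.dist (i₂ l) (f (i₁ l)) = 0 := by
        rw [hfpos]; exact SimpleGraph.dist_self
      exact ((hc₂.dist_eq_zero_iff).mp h0).symm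
    · have hvbet : T₁.dist (i₁ r) (i₁ l) + T₁.dist (i₁ l) (i₁ l) = T₁.dist (i₁ r) (i₁ l) := by
        rw [SimpleGraph.dist_self, add_zero]
      have hwbet : T₂.dist (i₂ r) (i₂ l) + T₂.dist (i₂ l) (i₂ l) = T₂.dist (i₂ r) (i₂ l) := by
        rw [SimpleGraph.dist_self, add_zero]
      have := master h₁ h₂ hmed r (pick (i₁ l)) l (hpickne (i₁ l)) (Ne.symm hlr).symm
        (hpickbet (i₁ l)) hvbet (hfbet (i₁ l)) hwbet (hfpos (i₁ l))
        (LD r l (Ne.symm hlr)).symm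
      rw [SimpleGraph.dist_self] at this
      exact (hc₂.dist_eq_zero_iff).mp this
end

section
/- Every graph admitting a mirror-decomposition has treewidth at most 2. -/
/-- A tree-decomposition of `G`. -/
def IsTreeDecomp {V : Type*} {ι : Type} (G : SimpleGraph V) (T : SimpleGraph ι)
    (bag : ι → Set V) : Prop :=
  T.IsTree ∧
  (∀ v : V, ∃ i, v ∈ bag i) ∧
  (∀ ⦃u v : V⦄, G.Adj u v → ∃ i, u ∈ bag i ∧ v ∈ bag i) ∧
  (∀ v : V, (T.induce {i | v ∈ bag i}).Connected)

/-- The treewidth of `G`. -/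
noncomputable def treewidth {V : Type*} (G : SimpleGraph V) : ℕ∞ :=
  sInf {w : ℕ∞ | ∃ (ι : Type) (T : SimpleGraph ι) (bag : ι → Set V),
    IsTreeDecomp G T bag ∧ ∀ i, (bag i).encard ≤ w + 1}

/-!
Root `T` at `r` with parent map `p`. Each vertex `x` of `T` contributes two bags,
`{x, p x, ι x}` and `{p x, ι x, ι (p x)}`; the decomposition tree joins the first bag of `x`
to its second, and the second to the first bag of `p x`. The two bags of `x` cover the edge
`x — p x` of `T` and its mirror `ι x — ι (p x)` in `T'`. Since `ι` fixes the common vertices,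
every vertex of `H` is `x` or `ι x` for exactly one `x`, and the bags containing it form a star
around the first bag of that `x`.
-/

namespace SimpleGraph

variable {α : Type*}

def ofParent (r : α) (P : α → α) : SimpleGraph α :=
  fromRel fun a b => a ≠ r ∧ b = P a

section ofParent

variable {r : α} {P : α → α} {d : α → ℕ}

lemma ofParent_adj_parent {a : α} (ha : a ≠ r) (hd : d (P a) < d a) :
    (ofParent r P).Adj a (P a) :=
  (fromRel_adj _ _ _).2 ⟨ne_of_apply_ne d hd.ne', Or.inl ⟨ha, rfl⟩⟩

lemma eq_parent_of_ofParent_adj (hd : ∀ a ≠ r, d (P a) < d a) {a b : α}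
    (h : (ofParent r P).Adj a b) (hab : d b ≤ d a) : b = P a := by
  obtain ⟨-, ⟨-, rfl⟩ | ⟨hb, rfl⟩⟩ := (fromRel_adj _ _ _).1 h
  · rfl
  · exact absurd hab (hd b hb).not_ge

lemma reachable_root_ofParent (hd : ∀ a ≠ r, d (P a) < d a) (a : α) :
    (ofParent r P).Reachable a r := by
  induction h : d a using Nat.strong_induction_on generalizing a with
  | _ n ih =>
    by_cases ha : a = r
    · rw [ha]
    · exact (ofParent_adj_parent ha (hd a ha)).reachable.trans (ih _ (h ▸ hd a ha) _ rfl)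

/-- Rotate a cycle to start at a vertex `m` of maximal depth: both cycle-neighbours of `m`
are then its parent, so they coincide. -/
lemma isAcyclic_ofParent (hd : ∀ a ≠ r, d (P a) < d a) : (ofParent r P).IsAcyclic := by
  classical
  intro v c hc
  obtain ⟨m, hm, hmax⟩ := c.support.toFinset.exists_max_image d ⟨v, by simp⟩
  rw [List.mem_toFinset] at hm
  set c' := c.rotate m hm
  have hc' : c'.IsCycle := hc.rotate hm
  have hle : ∀ i, d (c'.getVert i) ≤ d m := fun i =>
    hmax _ (List.mem_toFinset.2 ((c.mem_support_rotate_iff m hm).1 (c'.getVert_mem_support i)))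
  have hsnd : c'.snd = P m :=
    eq_parent_of_ofParent_adj hd (c'.adj_snd hc'.not_nil) (hle 1)
  have hpen : c'.penultimate = P m :=
    eq_parent_of_ofParent_adj hd (c'.adj_penultimate hc'.not_nil).symm (hle _)
  exact hc'.snd_ne_penultimate (hsnd.trans hpen.symm)

lemma isTree_ofParent (hd : ∀ a ≠ r, d (P a) < d a) : (ofParent r P).IsTree where
  connected := have : Nonempty α := ⟨r⟩; Connected.mk fun a b =>
    (reachable_root_ofParent hd a).trans (reachable_root_ofParent hd b).symm
  isAcyclic := isAcyclic_ofParent hd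

end ofParent

/-- The parent of `x` is the second vertex of the path from `x` to `r`, and the depth is the
length of that path. -/
lemma IsTree.exists_eq_ofParent {T : SimpleGraph α} (hT : T.IsTree) (r : α) :
    ∃ (p : α → α) (d : α → ℕ), p r = r ∧ (∀ x ≠ r, d (p x) < d x) ∧ T = ofParent r p := by
  choose W hW hWu using fun x => hT.existsUnique_path x r
  have hWr : W r = Walk.nil := (hWu r _ Walk.IsPath.nil).symm
  have hWnil : ∀ x ≠ r, ¬ (W x).Nil := fun x hx => Walk.not_nil_of_ne hx
  have hWtail : ∀ x, (W x).tail = W (W x).snd := fun x => hWu _ _ (hW x).tail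
  have hparent_adj : ∀ x ≠ r, T.Adj x (W x).snd := fun x hx => (W x).adj_snd (hWnil x hx)
  refine ⟨fun x => (W x).snd, fun x => (W x).length, by simp [hWr], fun x hx => ?_, ?_⟩
  · change (W (W x).snd).length < (W x).length
    rw [← (W x).length_tail_add_one (hWnil x hx), hWtail]
    exact Nat.lt_succ_self _
  ext u v
  refine ⟨fun h => (fromRel_adj _ _ _).2 ⟨h.ne, ?_⟩, fun h => ?_⟩
  · by_cases hv : v ∈ (W u).support
    · have hu : u ≠ r := by rintro rfl; simp [hWr, h.ne'] at hv
      exact Or.inl ⟨hu, hT.isAcyclic.eq_snd_of_adj_start (hW u) h hv⟩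
    · have hvr : v ≠ r := by rintro rfl; exact hv (W u).end_mem_support
      have hWv : W v = .cons h.symm (W u) := (hWu v _ ((hW u).cons hv)).symm
      exact Or.inr ⟨hvr, by simp [hWv]⟩
  · obtain ⟨-, ⟨hu, rfl⟩ | ⟨hv, rfl⟩⟩ := (fromRel_adj _ _ _).1 h
    · exact hparent_adj u hu
    · exact (hparent_adj v hv).symm

section Mirror

variable {α V : Type*} (p : α → α) (f g : α → V)

def mirrorParent : α × Bool → α × Bool
  | (x, false) => (x, true)
  | (x, true) => (p x, false)

def mirrorBag : α × Bool → Set V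
  | (x, false) => {f x, f (p x), g x}
  | (x, true) => {f (p x), g x, g (p x)}

lemma encard_mirrorBag_le (i : α × Bool) : (mirrorBag p f g i).encard ≤ 3 := by
  obtain ⟨x, _ | _⟩ := i <;>
  · grw [mirrorBag, Set.encard_insert_le, Set.encard_insert_le, Set.encard_singleton]
    rfl

variable {p} {r : α}

lemma ofParent_mirrorParent_adj_false_true (x : α) :
    (ofParent (r, true) (mirrorParent p)).Adj (x, false) (x, true) :=
  (fromRel_adj _ _ _).2 ⟨by simp, Or.inl ⟨by simp, rfl⟩⟩

lemma ofParent_mirrorParent_adj_true_parent (hpr : p r = r) (x : α) :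
    (ofParent (r, true) (mirrorParent p)).Adj (x, true) (p x, false) := by
  by_cases hx : x = r
  · subst hx
    rw [hpr]
    exact (ofParent_mirrorParent_adj_false_true x).symm
  · exact (fromRel_adj _ _ _).2 ⟨by simp, Or.inl ⟨by simpa using hx, rfl⟩⟩

variable {f g}

lemma connected_induce_mirrorBag (hpr : p r = r) (hf : f.Injective) (hg : g.Injective)
    (hfg : ∀ a b, f a = g b → a = b) {v : V} {a : α} (hva : v = f a ∨ v = g a) :
    ((ofParent (r, true) (mirrorParent p)).induce {i | v ∈ mirrorBag p f g i}).Connected := by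
  set D := ofParent (r, true) (mirrorParent p)
  have hfib : ∀ {y}, v = f y ∨ v = g y → y = a := by
    rintro y (rfl | rfl) <;> rcases hva with h | h
    exacts [hf h, hfg y a h, (hfg a y h.symm).symm, hg h]
  have hub : v ∈ mirrorBag p f g (a, false) := by
    rcases hva with rfl | rfl <;> simp [mirrorBag]
  have step : ∀ {i j : α × Bool} (hi : v ∈ mirrorBag p f g i) (hj : v ∈ mirrorBag p f g j),
      D.Adj i j → (D.induce {i | v ∈ mirrorBag p f g i}).Reachable ⟨i, hi⟩ ⟨j, hj⟩ :=
    fun _ _ h => Adj.reachable h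
  have to_hub : ∀ i, (D.induce {i | v ∈ mirrorBag p f g i}).Reachable i ⟨(a, false), hub⟩ := by
    rintro ⟨⟨x, _ | _⟩, hi⟩ <;>
      simp only [mirrorBag, Set.mem_ofPred_eq, Set.mem_insert_iff, Set.mem_singleton_iff] at hi
    · rcases hi with h | h | h
      · obtain rfl := hfib (.inl h); rfl
      · obtain rfl := hfib (.inl h)
        have hmid : v ∈ mirrorBag p f g (x, true) := by simp [mirrorBag, h]
        exact (step _ hmid (ofParent_mirrorParent_adj_false_true x)).trans
          (step hmid hub (ofParent_mirrorParent_adj_true_parent hpr x))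
      · obtain rfl := hfib (.inr h); rfl
    · rcases hi with h | h | h
      · obtain rfl := hfib (.inl h)
        exact step _ hub (ofParent_mirrorParent_adj_true_parent hpr x)
      · obtain rfl := hfib (.inr h)
        exact step _ hub (ofParent_mirrorParent_adj_false_true x).symm
      · obtain rfl := hfib (.inr h)
        exact step _ hub (ofParent_mirrorParent_adj_true_parent hpr x)
  have : Nonempty {i | v ∈ mirrorBag p f g i} := ⟨⟨(a, false), hub⟩⟩
  exact Connected.mk fun i j => (to_hub i).trans (to_hub j).symm

end Mirror

end SimpleGraph

open SimpleGraph

theorem isTreeDecomp_mirrorBag {α : Type} {V : Type*} {G : SimpleGraph V} {r : α} {p : α → α}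
    {d : α → ℕ} {f g : α → V} (hpr : p r = r) (hd : ∀ x ≠ r, d (p x) < d x)
    (hf : f.Injective) (hg : g.Injective) (hfg : ∀ a b, f a = g b → a = b)
    (hcover : Set.range f ∪ Set.range g = Set.univ)
    (hG : G ≤ (ofParent r p).map f ⊔ (ofParent r p).map g) :
    IsTreeDecomp G (ofParent (r, true) (mirrorParent p)) (mirrorBag p f g) := by
  have hpar : ∀ {a b}, (ofParent r p).Adj a b → b = p a ∨ a = p b := by
    intro a b h
    obtain ⟨-, ⟨-, rfl⟩ | ⟨-, rfl⟩⟩ := (fromRel_adj _ _ _).1 h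
    exacts [.inl rfl, .inr rfl]
  have hmem : ∀ v, ∃ a, v = f a ∨ v = g a := by
    intro v
    rcases hcover.symm ▸ Set.mem_univ v with ⟨a, rfl⟩ | ⟨a, rfl⟩
    exacts [⟨a, .inl rfl⟩, ⟨a, .inr rfl⟩]
  -- depth in the decomposition tree, where the first bag of `x` hangs below its second bag
  refine ⟨isTree_ofParent (d := fun i => 2 * d i.1 + if i.2 then 0 else 1) ?_, fun v => ?_,
    fun u v huv => ?_, fun v => ?_⟩
  · rintro ⟨x, _ | _⟩ hx
    · simp [mirrorParent]
    · have := hd x (by simpa using hx)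
      simp [mirrorParent]
      omega
  · obtain ⟨a, rfl | rfl⟩ := hmem v <;> exact ⟨(a, false), by simp [mirrorBag]⟩
  · rcases hG huv with ⟨-, a, b, hab, rfl, rfl⟩ | ⟨-, a, b, hab, rfl, rfl⟩ <;>
      rcases hpar hab with rfl | rfl
    exacts [⟨(a, false), by simp [mirrorBag]⟩, ⟨(b, false), by simp [mirrorBag]⟩,
      ⟨(a, true), by simp [mirrorBag]⟩, ⟨(b, true), by simp [mirrorBag]⟩]
  · obtain ⟨a, ha⟩ := hmem v
    exact connected_induce_mirrorBag hpr hf hg hfg ha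

/-- The transfer to `Fin n` is needed because `treewidth` only quantifies over index types
in `Type`. -/
theorem SimpleGraph.IsTree.treewidth_le_two_of_le_map_sup_map {α V : Type*} [Finite α]
    {T : SimpleGraph α} (hT : T.IsTree) {G : SimpleGraph V} {f g : α → V}
    (hf : f.Injective) (hg : g.Injective) (hfg : ∀ a b, f a = g b → a = b)
    (hcover : Set.range f ∪ Set.range g = Set.univ) (hG : G ≤ T.map f ⊔ T.map g) :
    treewidth G ≤ 2 := by
  obtain ⟨n, ⟨e⟩⟩ := Finite.exists_equiv_fin α
  have hTe : (T.map e).IsTree := (Iso.map e T).isTree_iff.1 hT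
  obtain ⟨r⟩ := hTe.connected.nonempty
  obtain ⟨p, d, hpr, hd, hTp⟩ := hTe.exists_eq_ofParent r
  have hmap : ∀ φ : α → V, T.map φ = (ofParent r p).map (φ ∘ e.symm) := by
    intro φ
    rw [← hTp, map_map, Function.comp_assoc, e.symm_comp_self, Function.comp_id]
  have hrange : ∀ φ : α → V, Set.range (φ ∘ e.symm) = Set.range φ :=
    fun φ => e.symm.surjective.range_comp φ
  refine sInf_le ⟨_, _, _, isTreeDecomp_mirrorBag hpr hd (hf.comp e.symm.injective)
    (hg.comp e.symm.injective) (fun a b h => e.symm.injective (hfg _ _ h))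
    (by rwa [hrange, hrange]) (by rwa [← hmap, ← hmap]),
    fun i => (encard_mirrorBag_le _ _ _ i).trans (by norm_num)⟩

theorem treewidth_le_two_of_mirror_decomposition_general {V : Type*} [Finite V]
    (H : SimpleGraph V) (T T' : H.Subgraph)
    (ht : T.coe.IsTree)
    (hverts : T.verts ∪ T'.verts = Set.univ)
    (hedges : ∀ ⦃u v : V⦄, H.Adj u v → T.Adj u v ∨ T'.Adj u v)
    (ι : T.coe ≃g T'.coe)
    (hfix : ∀ (v : V) (hv : v ∈ T.verts) (hv' : v ∈ T'.verts),
      ((ι ⟨v, hv⟩ : T'.verts) : V) = v) :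
    treewidth H ≤ 2 := by
  refine ht.treewidth_le_two_of_le_map_sup_map (f := Subtype.val) (g := Subtype.val ∘ ι)
    Subtype.val_injective (Subtype.val_injective.comp ι.injective) ?_ ?_ ?_
  · intro a b h
    have hιa : (ι a : V) = a := hfix a a.2 (h ▸ (ι b).2)
    exact ι.injective (Subtype.ext (hιa.trans h))
  · rwa [ι.surjective.range_comp, Subtype.range_val, Subtype.range_val]
  · intro u v huv
    rcases hedges huv with h | h
    · exact .inl ⟨huv.ne, ⟨u, h.fst_mem⟩, ⟨v, h.snd_mem⟩, h, rfl, rfl⟩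
    · exact .inr ⟨huv.ne, ι.symm ⟨u, h.fst_mem⟩, ι.symm ⟨v, h.snd_mem⟩,
        ι.symm.map_adj_iff.2 h, by simp, by simp⟩

/-- Every graph admitting a mirror-decomposition (`H = T ∪ T'` with `T`, `T'`
trees having no common internal vertices, together with an isomorphism
`ι : T ≃ T'` fixing every common vertex) has treewidth at most `2`. -/
theorem treewidth_le_two_of_mirror_decomposition {V : Type*} [Finite V]
    (H : SimpleGraph V) (T T' : H.Subgraph)
    (ht : T.coe.IsTree) (ht' : T'.coe.IsTree)
    (hverts : T.verts ∪ T'.verts = Set.univ)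
    (hedges : ∀ ⦃u v : V⦄, H.Adj u v → T.Adj u v ∨ T'.Adj u v)
    (hint : ∀ v, v ∈ T.verts → v ∈ T'.verts →
      ¬ (2 ≤ (T.neighborSet v).ncard ∧ 2 ≤ (T'.neighborSet v).ncard))
    (ι : T.coe ≃g T'.coe)
    (hfix : ∀ (v : V) (hv : v ∈ T.verts) (hv' : v ∈ T'.verts),
      ((ι ⟨v, hv⟩ : T'.verts) : V) = v) :
    treewidth H ≤ 2 :=
  treewidth_le_two_of_mirror_decomposition_general H T T' ht hverts hedges ι hfix
end

section
/- Every 2-connected graph whose edge set can be covered by 2 isometric subtrees has treewidth at most 2; consequently (using the block decomposition of treewidth) every graph edge-coverable by 2 isometric trees has treewidth at most 2. -/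
/-!
Root both trees at a common vertex `r` when they meet. By isometry, depths in either tree are
`dist r ·`, and `a` is an ancestor of `v` exactly when `dist r a + dist a v = dist r v`. For every
common vertex `v`, pair its `T₁`- and `T₂`-ancestors of equal depth. This is a partial matching:
two ancestors at depth `k` of vertices `v, v'` with `dist v v' ≤ (depth v - k) + (depth v' - k)`
coincide in a tree, and this bound transfers from one tree to the other through `G`. The matching
is closed under taking parents, so contracting the pairs gives a rooted tree in which a pair
`{x, y}` and its parent pair `{p₁ x, p₂ y}` span at most four vertices. Splitting each such
quadrilateral into the triangles `{x, y, p₂ y}` and `{x, p₁ x, p₂ y}` yields a tree-decomposition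
with bags of size at most three.
-/

open SimpleGraph

namespace SimpleGraph

variable {ι : Type*} {ρ : ι} {par : ι → ι} {rank : ι → ℕ}

def parentGraph (ρ : ι) (par : ι → ι) : SimpleGraph ι :=
  fromRel fun i j => i ≠ ρ ∧ par i = j

lemma parentGraph_adj_par (hrank : ∀ i ≠ ρ, rank (par i) < rank i) {i : ι} (hi : i ≠ ρ) :
    (parentGraph ρ par).Adj i (par i) :=
  (fromRel_adj _ _ _).mpr ⟨fun h => (hrank i hi).ne (congrArg rank h).symm, Or.inl ⟨hi, rfl⟩⟩

lemma reachable_induce_parentGraph (hrank : ∀ i ≠ ρ, rank (par i) < rank i) {S : Set ι} {t : ι}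
    (ht : t ∈ S) (hS : ∀ i ∈ S, i ≠ t → i ≠ ρ ∧ par i ∈ S) (i : ι) (hi : i ∈ S) :
    ((parentGraph ρ par).induce S).Reachable ⟨i, hi⟩ ⟨t, ht⟩ := by
  induction hn : rank i using Nat.strong_induction_on generalizing i with
  | _ n ih =>
    by_cases hit : i = t
    · subst hit; rfl
    obtain ⟨hiρ, hpar⟩ := hS i hi hit
    have hadj : ((parentGraph ρ par).induce S).Adj ⟨i, hi⟩ ⟨par i, hpar⟩ :=
      parentGraph_adj_par hrank hiρ
    exact hadj.reachable.trans (ih _ (hn ▸ hrank i hiρ) _ hpar rfl)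

lemma parentGraph_connected (hrank : ∀ i ≠ ρ, rank (par i) < rank i) :
    (parentGraph ρ par).Connected := by
  have hS : ∀ i ∈ Set.univ, i ≠ ρ → i ≠ ρ ∧ par i ∈ Set.univ := fun _ _ hi => ⟨hi, trivial⟩
  have hreach (i : ι) : (parentGraph ρ par).Reachable i ρ :=
    (reachable_induce_parentGraph hrank (Set.mem_univ ρ) hS i trivial).map
      (Embedding.induce _).toHom
  exact (connected_iff_exists_forall_reachable _).mpr ⟨ρ, fun i => (hreach i).symm⟩

lemma parentGraph_isTree [Finite ι] (hrank : ∀ i ≠ ρ, rank (par i) < rank i) :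
    (parentGraph ρ par).IsTree := by
  rw [isTree_iff_connected_and_card]
  refine ⟨parentGraph_connected hrank, ?_⟩
  let e : {i // i ≠ ρ} → (parentGraph ρ par).edgeSet :=
    fun i => ⟨s(i.1, par i.1), parentGraph_adj_par hrank i.2⟩
  have he : Function.Bijective e := by
    refine ⟨fun i j hij => Subtype.ext ?_, ?_⟩
    · rcases Sym2.eq_iff.mp (congrArg Subtype.val hij) with ⟨h, -⟩ | ⟨h₁, h₂⟩
      · exact h
      · have h₃ := hrank _ i.2
        have h₄ := hrank _ j.2
        rw [h₂] at h₃
        rw [← h₁] at h₄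
        omega
    · rintro ⟨x, hx⟩
      induction x using Sym2.ind with
      | h a b =>
        rcases ((fromRel_adj _ _ _).mp ((mem_edgeSet _).mp hx)).2 with ⟨ha, rfl⟩ | ⟨hb, rfl⟩
        · exact ⟨⟨a, ha⟩, rfl⟩
        · exact ⟨⟨b, hb⟩, Subtype.ext Sym2.eq_swap⟩
  classical
  rw [← Nat.card_congr (Equiv.ofBijective e he), ← Finite.card_option,
    Nat.card_congr (Equiv.optionSubtypeNe ρ)]

end SimpleGraph

section TreeDecomposition

variable {V : Type*} {G : SimpleGraph V}

lemma isTreeDecomp_parentGraph {ι : Type} [Finite ι] {ρ : ι} {par : ι → ι} {rank : ι → ℕ}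
    {bag : ι → Set V} {top : V → ι} (hrank : ∀ i ≠ ρ, rank (par i) < rank i)
    (htop : ∀ v, v ∈ bag (top v)) (hedge : ∀ ⦃u v⦄, G.Adj u v → ∃ i, u ∈ bag i ∧ v ∈ bag i)
    (hpar : ∀ v i, v ∈ bag i → i ≠ top v → i ≠ ρ ∧ v ∈ bag (par i)) :
    IsTreeDecomp G (parentGraph ρ par) bag := by
  refine ⟨parentGraph_isTree hrank, fun v => ⟨top v, htop v⟩, hedge, fun v => ?_⟩
  refine (connected_iff_exists_forall_reachable _).mpr ⟨⟨top v, htop v⟩, fun i => ?_⟩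
  exact (reachable_induce_parentGraph hrank (htop v) (hpar v) i.1 i.2).symm

lemma treewidth_le_of_parent {ι : Type*} [Finite ι] {ρ : ι} {par : ι → ι} {rank : ι → ℕ}
    {bag : ι → Set V} {top : V → ι} {k : ℕ∞} (hrank : ∀ i ≠ ρ, rank (par i) < rank i)
    (htop : ∀ v, v ∈ bag (top v)) (hedge : ∀ ⦃u v⦄, G.Adj u v → ∃ i, u ∈ bag i ∧ v ∈ bag i)
    (hpar : ∀ v i, v ∈ bag i → i ≠ top v → i ≠ ρ ∧ v ∈ bag (par i))
    (hcard : ∀ i, (bag i).encard ≤ k + 1) :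
    treewidth G ≤ k := by
  obtain ⟨n, ⟨e⟩⟩ := Finite.exists_equiv_fin ι
  refine sInf_le ⟨Fin n, parentGraph (e ρ) (e ∘ par ∘ e.symm), bag ∘ e.symm,
    isTreeDecomp_parentGraph (rank := rank ∘ e.symm) (top := e ∘ top) ?_ ?_ ?_ ?_,
    fun i => hcard _⟩
  · intro i hi
    simpa using hrank (e.symm i) (by simpa [Equiv.symm_apply_eq] using hi)
  · simpa using htop
  · intro u v huv
    obtain ⟨i, hu, hv⟩ := hedge huv
    exact ⟨e i, by simpa using hu, by simpa using hv⟩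
  · intro v i hv hi
    simpa [Equiv.symm_apply_eq] using hpar v (e.symm i) hv (by simpa [Equiv.symm_apply_eq] using hi)

end TreeDecomposition

namespace SimpleGraph

variable {W : Type*} {H : SimpleGraph W}

lemma Connected.exists_adj_dist_add_one_eq (hH : H.Connected) {a v : W} (hav : a ≠ v) :
    ∃ w, H.Adj w v ∧ H.dist a w + 1 = H.dist a v := by
  obtain ⟨p, hp⟩ := hH.exists_walk_length_eq_dist a v
  have hnil : ¬ p.Nil := fun h => hav h.eq
  have hadj := p.adj_penultimate hnil
  refine ⟨p.penultimate, hadj, le_antisymm ?_ ?_⟩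
  · have := dist_le p.dropLast
    have := p.length_dropLast_add_one hnil
    omega
  · calc H.dist a v ≤ H.dist a p.penultimate + H.dist p.penultimate v := hH.dist_triangle
      _ = H.dist a p.penultimate + 1 := by rw [dist_eq_one_iff_adj.mpr hadj]

lemma Connected.dist_add_dist_eq_of_adj (hH : H.Connected) {ρ y w v : W}
    (hy : H.dist ρ y + H.dist y w = H.dist ρ w) (hadj : H.Adj w v)
    (hv : H.dist ρ v = H.dist ρ w + 1) : H.dist ρ y + H.dist y v = H.dist ρ v := by
  have h₁ : H.dist y v ≤ H.dist y w + H.dist w v := hH.dist_triangle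
  have h₂ : H.dist ρ v ≤ H.dist ρ y + H.dist y v := hH.dist_triangle
  rw [dist_eq_one_iff_adj.mpr hadj] at h₁
  omega

lemma Connected.exists_adj_dist_add_dist_eq (hH : H.Connected) {ρ y v : W}
    (hy : H.dist ρ y + H.dist y v = H.dist ρ v) (hyv : y ≠ v) :
    ∃ w, H.Adj w v ∧ H.dist ρ w + 1 = H.dist ρ v ∧ H.dist ρ y + H.dist y w = H.dist ρ w := by
  obtain ⟨w, hadj, hw⟩ := hH.exists_adj_dist_add_one_eq hyv
  have h₁ : H.dist ρ w ≤ H.dist ρ y + H.dist y w := hH.dist_triangle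
  have h₂ : H.dist ρ v ≤ H.dist ρ w + H.dist w v := hH.dist_triangle
  rw [dist_eq_one_iff_adj.mpr hadj] at h₂
  exact ⟨w, hadj, by omega, by omega⟩

lemma IsTree.eq_of_adj_of_dist_add_one (hH : H.IsTree) {ρ u u' v : W} (hu : H.Adj u v)
    (hu' : H.Adj u' v) (hdu : H.dist ρ u + 1 = H.dist ρ v) (hdu' : H.dist ρ u' + 1 = H.dist ρ v) :
    u = u' := by
  classical
  obtain ⟨p, hp, -⟩ := hH.connected.exists_path_of_dist ρ v
  -- every neighbour one level up lies on the geodesic to `v`, hence is its penultimate vertex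
  have key (x : W) (hx : H.Adj x v) (hdx : H.dist ρ x + 1 = H.dist ρ v) : x = p.penultimate := by
    obtain ⟨q, hq, hql⟩ := hH.connected.exists_path_of_dist ρ x
    have hvq : v ∉ q.support := fun hv => by
      have := dist_le (q.takeUntil v hv)
      have := q.length_takeUntil_le_length hv
      omega
    exact hH.isAcyclic.eq_penultimate_of_adj_end hp hx.symm
      (hH.isAcyclic.mem_support_of_ne_mem_support_of_adj_of_isPath hp hq hx.symm hvq)
  rw [key u hu hdu, key u' hu' hdu']

lemma IsTree.dist_add_dist_eq_of_adj_of_lt (hH : H.IsTree) {ρ y w v : W}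
    (hy : H.dist ρ y + H.dist y v = H.dist ρ v) (hlt : H.dist ρ y < H.dist ρ v)
    (hadj : H.Adj w v) (hw : H.dist ρ w + 1 = H.dist ρ v) :
    H.dist ρ y + H.dist y w = H.dist ρ w := by
  obtain ⟨w', hadj', hw', hy'⟩ :=
    hH.connected.exists_adj_dist_add_dist_eq hy (by rintro rfl; exact lt_irrefl _ hlt)
  rwa [hH.eq_of_adj_of_dist_add_one hadj hadj' hw hw']

lemma IsTree.eq_of_dist_add_dist_eq_of_dist_eq (hH : H.IsTree) {ρ y y' v : W}
    (hy : H.dist ρ y + H.dist y v = H.dist ρ v) (hy' : H.dist ρ y' + H.dist y' v = H.dist ρ v)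
    (hyy' : H.dist ρ y = H.dist ρ y') : y = y' := by
  induction hn : H.dist ρ v using Nat.strong_induction_on generalizing v with
  | _ n ih =>
    by_cases hyv : y = v
    · subst hyv
      exact ((hH.connected.dist_eq_zero_iff).mp (by omega)).symm
    obtain ⟨w, hadj, hw, hyw⟩ := hH.connected.exists_adj_dist_add_dist_eq hy hyv
    have hlt : H.dist ρ y < H.dist ρ v := by
      have := hH.connected.pos_dist_of_ne hyv
      omega
    exact ih _ (by omega) hyw (hH.dist_add_dist_eq_of_adj_of_lt hy' (by omega) hadj hw) rfl

/-- In a tree rooted at `ρ`, ancestors `y`, `y'` at the same depth `k` of `v`, `v'` coincide as soon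
as `v` and `v'` are close enough to have a common ancestor at depth `k`. -/
lemma IsTree.eq_of_dist_add_dist_eq (hH : H.IsTree) {ρ y y' v v' : W}
    (hy : H.dist ρ y + H.dist y v = H.dist ρ v) (hy' : H.dist ρ y' + H.dist y' v' = H.dist ρ v')
    (hyy' : H.dist ρ y = H.dist ρ y')
    (hvv' : H.dist v v' + 2 * H.dist ρ y ≤ H.dist ρ v + H.dist ρ v') : y = y' := by
  have hc := hH.connected
  induction hn : H.dist v v' using Nat.strong_induction_on generalizing v' y' with
  | _ n ih =>
    by_cases hvv : v = v'
    · subst hvv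
      exact hH.eq_of_dist_add_dist_eq_of_dist_eq hy hy' hyy'
    obtain ⟨w, hadj, hw⟩ := hc.exists_adj_dist_add_one_eq hvv
    rcases hH.dist_eq_dist_add_one_of_adj ρ hadj with hlev | hlev
    · have hy'w := hc.dist_add_dist_eq_of_adj hy' hadj.symm hlev
      exact ih _ (by omega) hy'w hyy' (by omega) rfl
    · by_cases hlt : H.dist ρ y' < H.dist ρ v'
      · have hy'w := hH.dist_add_dist_eq_of_adj_of_lt hy' hlt hadj (by omega)
        exact ih _ (by omega) hy'w hyy' (by omega) rfl
      · have hy'v' : y' = v' := hc.dist_eq_zero_iff.mp (by omega)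
        subst hy'v'
        have htri : H.dist ρ v ≤ H.dist ρ y' + H.dist y' v := hc.dist_triangle
        rw [dist_comm] at hvv'
        exact hH.eq_of_dist_add_dist_eq_of_dist_eq hy (by omega) hyy'

end SimpleGraph

namespace SimpleGraph.Subgraph

variable {V : Type*} {G : SimpleGraph V}

structure IsIsometricTree (T : G.Subgraph) : Prop where
  isTree : T.coe.IsTree
  dist_coe : ∀ x y : T.verts, T.coe.dist x y = G.dist x y

variable {T : G.Subgraph} {r u v x y : V}

open Classical in
/-- Junk value: `v` itself when `v = r` or `v ∉ T.verts`. -/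
noncomputable def treeParent (T : G.Subgraph) (r v : V) : V :=
  if h : ∃ u, T.Adj u v ∧ G.dist r u + 1 = G.dist r v then h.choose else v

lemma treeParent_spec (h : T.treeParent r v ≠ v) :
    T.Adj (T.treeParent r v) v ∧ G.dist r (T.treeParent r v) + 1 = G.dist r v := by
  unfold treeParent at h ⊢
  split_ifs at h ⊢ with hex
  · exact hex.choose_spec
  · exact absurd rfl h

lemma treeParent_mem (h : T.treeParent r v ≠ v) : T.treeParent r v ∈ T.verts :=
  T.edge_vert (treeParent_spec h).1

lemma mem_of_treeParent_ne (h : T.treeParent r v ≠ v) : v ∈ T.verts :=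
  T.edge_vert (treeParent_spec h).1.symm

lemma treeParent_of_notMem (hv : v ∉ T.verts) : T.treeParent r v = v :=
  not_imp_comm.mp mem_of_treeParent_ne hv

lemma treeParent_root : T.treeParent r r = r := by
  by_contra h
  have := (treeParent_spec h).2
  simp at this

namespace IsIsometricTree

variable (hT : T.IsIsometricTree)
include hT

lemma reachable (hx : x ∈ T.verts) (hy : y ∈ T.verts) : G.Reachable x y :=
  (hT.isTree.connected ⟨x, hx⟩ ⟨y, hy⟩).map T.hom

lemma dist_triangle (hx : x ∈ T.verts) (hy : y ∈ T.verts) (v : V) :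
    G.dist x v ≤ G.dist x y + G.dist y v :=
  (hT.reachable hx hy).dist_triangle_left v

lemma eq_of_dist_eq_zero (hx : x ∈ T.verts) (hy : y ∈ T.verts) (h : G.dist x y = 0) : x = y :=
  (hT.reachable hx hy).dist_eq_zero_iff.mp h

lemma exists_adj_dist_add_one_eq (hu : u ∈ T.verts) (hv : v ∈ T.verts) (huv : u ≠ v) :
    ∃ w, T.Adj w v ∧ G.dist u w + 1 = G.dist u v := by
  obtain ⟨⟨w, hw⟩, hadj, hd⟩ := hT.isTree.connected.exists_adj_dist_add_one_eq
    (a := ⟨u, hu⟩) (v := ⟨v, hv⟩) (by simpa using huv)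
  simp only [hT.dist_coe] at hd
  exact ⟨w, hadj, hd⟩

lemma dist_add_one_of_adj (hr : r ∈ T.verts) (hadj : T.Adj u v) :
    G.dist r u = G.dist r v + 1 ∨ G.dist r v = G.dist r u + 1 := by
  have := hT.isTree.dist_eq_dist_add_one_of_adj ⟨r, hr⟩
    (v := ⟨u, T.edge_vert hadj⟩) (w := ⟨v, T.edge_vert hadj.symm⟩) hadj
  simpa only [hT.dist_coe] using this

lemma eq_of_adj_of_dist_add_one {u' : V} (hr : r ∈ T.verts) (hu : T.Adj u v) (hu' : T.Adj u' v)
    (hdu : G.dist r u + 1 = G.dist r v) (hdu' : G.dist r u' + 1 = G.dist r v) :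
    u = u' := by
  have := hT.isTree.eq_of_adj_of_dist_add_one (ρ := ⟨r, hr⟩)
    (u := ⟨u, T.edge_vert hu⟩) (u' := ⟨u', T.edge_vert hu'⟩) (v := ⟨v, T.edge_vert hu.symm⟩)
    hu hu' (by simpa only [hT.dist_coe] using hdu) (by simpa only [hT.dist_coe] using hdu')
  exact congrArg Subtype.val this

lemma eq_of_dist_add_dist_eq {y' v' : V} (hr : r ∈ T.verts) (hy : y ∈ T.verts)
    (hy' : y' ∈ T.verts) (hv : v ∈ T.verts) (hv' : v' ∈ T.verts)
    (hyv : G.dist r y + G.dist y v = G.dist r v) (hyv' : G.dist r y' + G.dist y' v' = G.dist r v')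
    (hyy' : G.dist r y = G.dist r y')
    (hvv' : G.dist v v' + 2 * G.dist r y ≤ G.dist r v + G.dist r v') : y = y' := by
  have := hT.isTree.eq_of_dist_add_dist_eq (ρ := ⟨r, hr⟩) (y := ⟨y, hy⟩) (y' := ⟨y', hy'⟩)
    (v := ⟨v, hv⟩) (v' := ⟨v', hv'⟩)
  simp only [hT.dist_coe] at this
  exact congrArg Subtype.val (this hyv hyv' hyy' hvv')

lemma treeParent_eq (hr : r ∈ T.verts) (hadj : T.Adj u v)
    (hu : G.dist r u + 1 = G.dist r v) : T.treeParent r v = u := by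
  have hex : ∃ u, T.Adj u v ∧ G.dist r u + 1 = G.dist r v := ⟨u, hadj, hu⟩
  have hne : T.treeParent r v ≠ v := by
    rw [treeParent, dif_pos hex]
    exact hex.choose_spec.1.ne
  obtain ⟨hadj', hu'⟩ := treeParent_spec hne
  exact hT.eq_of_adj_of_dist_add_one hr hadj' hadj hu' hu

lemma treeParent_ne (hr : r ∈ T.verts)
    (hv : v ∈ T.verts) (hvr : v ≠ r) : T.treeParent r v ≠ v := by
  obtain ⟨u, hadj, hu⟩ := hT.exists_adj_dist_add_one_eq hr hv hvr.symm
  rw [hT.treeParent_eq hr hadj hu]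
  exact hadj.ne

lemma treeParent_eq_or (hr : r ∈ T.verts)
    (hadj : T.Adj u v) : T.treeParent r v = u ∨ T.treeParent r u = v := by
  rcases hT.dist_add_one_of_adj hr hadj with h | h
  · exact Or.inr (hT.treeParent_eq hr hadj.symm h.symm)
  · exact Or.inl (hT.treeParent_eq hr hadj h.symm)

lemma dist_add_dist_eq_treeParent (hr : r ∈ T.verts)
    (h : G.dist r x + G.dist x v = G.dist r v) :
    G.dist r (T.treeParent r x) + G.dist (T.treeParent r x) v = G.dist r v := by
  by_cases hne : T.treeParent r x = x
  · rwa [hne]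
  obtain ⟨hadj, hd⟩ := treeParent_spec hne
  have h₁ := hT.dist_triangle (treeParent_mem hne) (mem_of_treeParent_ne hne) v
  have h₂ := hT.dist_triangle hr (treeParent_mem hne) v
  rw [G.dist_eq_one_iff_adj.mpr (T.adj_sub hadj)] at h₁
  omega

end IsIsometricTree

end SimpleGraph.Subgraph

open SimpleGraph.Subgraph

section

variable {V : Type*} {G : SimpleGraph V}

structure IsometricTreeCover (G : SimpleGraph V) where
  T₁ : G.Subgraph
  T₂ : G.Subgraph
  isometric₁ : T₁.IsIsometricTree
  isometric₂ : T₂.IsIsometricTree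
  adj_or : ∀ ⦃u v : V⦄, G.Adj u v → T₁.Adj u v ∨ T₂.Adj u v
  r₁ : V
  r₂ : V
  r₁_mem : r₁ ∈ T₁.verts
  r₂_mem : r₂ ∈ T₂.verts
  r₁_eq_r₂ : ∀ v ∈ T₁.verts, v ∈ T₂.verts → r₁ = r₂

namespace IsometricTreeCover

variable (C : IsometricTreeCover G) {a u v w x y : V}

open Classical in
noncomputable def depth (v : V) : ℕ := if v ∈ C.T₁.verts then G.dist C.r₁ v else G.dist C.r₂ v

noncomputable abbrev p₁ (v : V) : V := C.T₁.treeParent C.r₁ v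

noncomputable abbrev p₂ (v : V) : V := C.T₂.treeParent C.r₂ v

variable {C}

lemma depth_of_mem₁ (h : v ∈ C.T₁.verts) : C.depth v = G.dist C.r₁ v := if_pos h

lemma depth_of_mem₂ (h : v ∈ C.T₂.verts) : C.depth v = G.dist C.r₂ v := by
  unfold depth
  split_ifs with h₁
  · rw [C.r₁_eq_r₂ v h₁ h]
  · rfl

lemma depth_p₁ (h : C.p₁ v ≠ v) : C.depth (C.p₁ v) + 1 = C.depth v := by
  rw [depth_of_mem₁ (treeParent_mem h), depth_of_mem₁ (mem_of_treeParent_ne h)]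
  exact (treeParent_spec h).2

lemma depth_p₂ (h : C.p₂ v ≠ v) : C.depth (C.p₂ v) + 1 = C.depth v := by
  rw [depth_of_mem₂ (treeParent_mem h), depth_of_mem₂ (mem_of_treeParent_ne h)]
  exact (treeParent_spec h).2

variable (C) in
/-- `x ∈ T₁` and `y ∈ T₂` are ancestors at the same depth of a common vertex `v` of both trees. -/
def Coupled (x y : V) : Prop :=
  x ∈ C.T₁.verts ∧ y ∈ C.T₂.verts ∧ G.dist C.r₁ x = G.dist C.r₂ y ∧
    ∃ v ∈ C.T₁.verts, v ∈ C.T₂.verts ∧ G.dist C.r₁ x + G.dist x v = G.dist C.r₁ v ∧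
      G.dist C.r₂ y + G.dist y v = G.dist C.r₂ v

lemma coupled_self (h₁ : v ∈ C.T₁.verts) (h₂ : v ∈ C.T₂.verts) : C.Coupled v v :=
  ⟨h₁, h₂, by rw [C.r₁_eq_r₂ v h₁ h₂], v, h₁, h₂, by simp, by simp⟩

namespace Coupled

lemma depth_eq (h : C.Coupled x y) : C.depth x = C.depth y := by
  rw [depth_of_mem₁ h.1, depth_of_mem₂ h.2.1]
  exact h.2.2.1

lemma right_unique {y' : V} (h : C.Coupled x y) (h' : C.Coupled x y') : y = y' := by
  obtain ⟨hx, hy, hxy, v, hv₁, hv₂, hxv, hyv⟩ := h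
  obtain ⟨-, hy', hxy', v', -, hv₂', hxv', hyv'⟩ := h'
  have hr := C.r₁_eq_r₂ v hv₁ hv₂
  have htri := C.isometric₁.dist_triangle hv₁ hx v'
  rw [G.dist_comm (u := v) (v := x)] at htri
  refine C.isometric₂.eq_of_dist_add_dist_eq C.r₂_mem hy hy' hv₂ hv₂' hyv hyv' (by omega) ?_
  rw [← hr] at hyv hyv' hxy hxy' ⊢
  omega

lemma left_unique {x' : V} (h : C.Coupled x y) (h' : C.Coupled x' y) : x = x' := by
  obtain ⟨hx, hy, hxy, v, hv₁, hv₂, hxv, hyv⟩ := h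
  obtain ⟨hx', -, hxy', v', hv₁', -, hxv', hyv'⟩ := h'
  have hr := C.r₁_eq_r₂ v hv₁ hv₂
  have htri := C.isometric₂.dist_triangle hv₂ hy v'
  rw [G.dist_comm (u := v) (v := y)] at htri
  refine C.isometric₁.eq_of_dist_add_dist_eq C.r₁_mem hx hx' hv₁ hv₁' hxv hxv' (by omega) ?_
  rw [hr] at hxv hxv' hxy hxy' ⊢
  omega

lemma treeParent (h : C.Coupled x y) (hx : C.p₁ x ≠ x) : C.Coupled (C.p₁ x) (C.p₂ y) := by
  obtain ⟨hx₁, hy₂, hxy, v, hv₁, hv₂, hxv, hyv⟩ := h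
  have hdx : G.dist C.r₁ (C.p₁ x) + 1 = G.dist C.r₁ x := (treeParent_spec hx).2
  have hy : C.p₂ y ≠ y :=
    C.isometric₂.treeParent_ne C.r₂_mem hy₂ (by rintro rfl; rw [dist_self] at hxy; omega)
  have hdy : G.dist C.r₂ (C.p₂ y) + 1 = G.dist C.r₂ y := (treeParent_spec hy).2
  exact ⟨treeParent_mem hx, treeParent_mem hy, by omega, v, hv₁, hv₂,
    C.isometric₁.dist_add_dist_eq_treeParent C.r₁_mem hxv,
    C.isometric₂.dist_add_dist_eq_treeParent C.r₂_mem hyv⟩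

lemma eq_and_p₂_eq_of_p₁_eq (h : C.Coupled x y) (hx : C.p₁ x = x) : y = x ∧ C.p₂ y = y := by
  obtain ⟨hx₁, hy₂, hxy, v, hv₁, hv₂, -, -⟩ := h
  have hxr : x = C.r₁ := by
    by_contra hne
    exact C.isometric₁.treeParent_ne C.r₁_mem hx₁ hne hx
  subst hxr
  have hyr : C.r₂ = y := C.isometric₂.eq_of_dist_eq_zero C.r₂_mem hy₂ (by simpa using hxy.symm)
  subst hyr
  exact ⟨(C.r₁_eq_r₂ v hv₁ hv₂).symm, treeParent_root⟩

end Coupled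

variable (C) in
def Paired (v w : V) : Prop := C.Coupled v w ∨ C.Coupled w v

lemma Paired.symm (h : C.Paired v w) : C.Paired w v := Or.symm h

lemma Paired.unique {w' : V} (h : C.Paired v w) (h' : C.Paired v w') : w = w' := by
  rcases h with h | h <;> rcases h' with h' | h'
  · exact h.right_unique h'
  · have hv := coupled_self h.1 h'.2.1
    exact (hv.right_unique h).symm.trans (h'.left_unique hv).symm
  · have hv := coupled_self h'.1 h.2.1
    exact (h.left_unique hv).trans (hv.right_unique h')
  · exact h.left_unique h'

variable (C) in
open Classical in
/-- Junk value: `v` itself when `v` is not paired. -/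
noncomputable def partner (v : V) : V := if h : ∃ w, C.Paired v w then h.choose else v

lemma partner_eq (h : C.Paired v w) : C.partner v = w := by
  have hex : ∃ w, C.Paired v w := ⟨w, h⟩
  rw [partner, dif_pos hex]
  exact hex.choose_spec.unique h

lemma partner_of_not_paired (h : ∀ w, ¬ C.Paired v w) : C.partner v = v := by
  rw [partner, dif_neg (not_exists.mpr h)]

lemma partner_partner : C.partner (C.partner v) = v := by
  by_cases h : ∃ w, C.Paired v w
  · obtain ⟨w, hw⟩ := h
    rw [partner_eq hw, partner_eq hw.symm]
  · rw [partner_of_not_paired (not_exists.mp h), partner_of_not_paired (not_exists.mp h)]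

lemma partner_of_mem (h₁ : v ∈ C.T₁.verts) (h₂ : v ∈ C.T₂.verts) : C.partner v = v :=
  partner_eq (Or.inl (coupled_self h₁ h₂))

lemma coupled_partner_or (h : v ∈ C.T₁.verts) :
    C.Coupled v (C.partner v) ∨ (C.partner v = v ∧ v ∉ C.T₂.verts) := by
  by_cases h₂ : v ∈ C.T₂.verts
  · left
    rw [partner_of_mem h h₂]
    exact coupled_self h h₂
  by_cases hp : ∃ w, C.Paired v w
  · obtain ⟨w, hw | hw⟩ := hp
    · exact Or.inl (partner_eq (Or.inl hw) ▸ hw)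
    · exact absurd hw.2.1 h₂
  · exact Or.inr ⟨partner_of_not_paired (not_exists.mp hp), h₂⟩

lemma depth_partner : C.depth (C.partner v) = C.depth v := by
  by_cases h : ∃ w, C.Paired v w
  · obtain ⟨w, hw⟩ := h
    rw [partner_eq hw]
    rcases hw with hw | hw
    · exact hw.depth_eq.symm
    · exact hw.depth_eq
  · rw [partner_of_not_paired (not_exists.mp h)]

lemma partner_eq_self_of_notMem (h : v ∉ C.T₁.verts) (hp : C.partner v ∉ C.T₁.verts) :
    C.partner v = v := by
  by_contra hne
  obtain ⟨w, hw | hw⟩ : ∃ w, C.Paired v w := by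
    by_contra hn
    exact hne (partner_of_not_paired (not_exists.mp hn))
  · exact h hw.1
  · exact hp (partner_eq (Or.inr hw) ▸ hw.1)

variable (C) in
open Classical in
/-- The representative of the pair `{v, partner v}`: its vertex in `T₁`, if any. -/
noncomputable def head (v : V) : V := if v ∈ C.T₁.verts then v else C.partner v

lemma head_of_mem (h : v ∈ C.T₁.verts) : C.head v = v := if_pos h

lemma head_of_notMem (h : v ∉ C.T₁.verts) : C.head v = C.partner v := if_neg h

lemma head_head : C.head (C.head v) = C.head v := by
  by_cases h : v ∈ C.T₁.verts
  · rw [head_of_mem h, head_of_mem h]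
  rw [head_of_notMem h]
  by_cases hp : C.partner v ∈ C.T₁.verts
  · exact head_of_mem hp
  · rw [head_of_notMem hp, partner_partner, partner_eq_self_of_notMem h hp]

lemma partner_head_of_notMem (h : v ∉ C.T₁.verts) : C.partner (C.head v) = v := by
  rw [head_of_notMem h, partner_partner]

lemma depth_head : C.depth (C.head v) = C.depth v := by
  unfold head
  split_ifs
  · rfl
  · exact depth_partner

lemma partner_eq_self_of_head_eq (h : C.head v = v) (hv : v ∉ C.T₁.verts) : C.partner v = v :=
  (head_of_notMem hv).symm.trans h

lemma head_partner (h : C.head v = v) (hne : C.partner v ≠ v) : C.head (C.partner v) = v := by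
  have hv : v ∈ C.T₁.verts := by
    by_contra hv
    exact hne (partner_eq_self_of_head_eq h hv)
  have hc : C.Coupled v (C.partner v) :=
    (coupled_partner_or hv).resolve_right fun h' => hne h'.1
  have hp : C.partner v ∉ C.T₁.verts := fun hp =>
    hne ((partner_of_mem hp hc.2.1).symm.trans (partner_eq (Or.inr hc)))
  rw [head_of_notMem hp, partner_partner]

variable (C) in
open Classical in
noncomputable def parent (v : V) : V := if v ∈ C.T₁.verts then C.p₁ v else C.p₂ v

lemma depth_parent (h : C.parent v ≠ v) : C.depth (C.parent v) + 1 = C.depth v := by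
  unfold parent at h ⊢
  split_ifs at h ⊢
  · exact depth_p₁ h
  · exact depth_p₂ h

variable (C) in
noncomputable def pairBag (a : V) : Set V := {a, C.partner a, C.p₂ (C.partner a)}

variable (C) in
noncomputable def linkBag (a : V) : Set V := {a, C.p₁ a, C.p₂ (C.partner a)}

lemma mem_pairBag_head (u : V) : u ∈ C.pairBag (C.head u) := by
  by_cases h : C.head u = u
  · rw [h]
    exact Or.inl rfl
  · exact Or.inr (Or.inl (partner_head_of_notMem fun hu => h (head_of_mem hu)).symm)

lemma eq_or_mem_pairBag_parent (ha : C.head a = a) (hu : u = C.p₁ a ∨ u = C.p₂ (C.partner a)) :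
    u = a ∨ (C.parent a ≠ a ∧ u ∈ C.pairBag (C.head (C.parent a))) := by
  by_cases ha₁ : a ∈ C.T₁.verts
  · have hpa : C.parent a = C.p₁ a := if_pos ha₁
    rw [hpa]
    rcases hu with rfl | rfl
    · by_cases hp : C.p₁ a = a
      · exact Or.inl hp
      · exact Or.inr ⟨hp, mem_pairBag_head _⟩
    rcases coupled_partner_or ha₁ with hc | ⟨hc, ha₂⟩
    · by_cases hp : C.p₁ a = a
      · obtain ⟨h₁, h₂⟩ := hc.eq_and_p₂_eq_of_p₁_eq hp
        exact Or.inl (h₂.trans h₁)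
      · rw [head_of_mem (treeParent_mem hp)]
        exact Or.inr ⟨hp, Or.inr (Or.inl (partner_eq (Or.inl (hc.treeParent hp))).symm)⟩
    · rw [hc]
      exact Or.inl (treeParent_of_notMem ha₂)
  · have hpa : C.parent a = C.p₂ a := if_neg ha₁
    rw [hpa]
    rcases hu with rfl | rfl
    · exact Or.inl (treeParent_of_notMem ha₁)
    rw [partner_eq_self_of_head_eq ha ha₁]
    by_cases hp : C.p₂ a = a
    · exact Or.inl hp
    · exact Or.inr ⟨hp, mem_pairBag_head _⟩

variable (C) in
open Classical in
/-- Each head `a` carries two nodes, `some (true, a)` and `some (false, a)`, whose bags are the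
two triangles of the quadrilateral spanned by the pair of `a` and its parent pair; `none` is an
extra root with empty bag. -/
noncomputable def bag : Option (Bool × V) → Set V
  | none => ∅
  | some (b, a) => if C.head a = a then (if b then C.pairBag a else C.linkBag a) else ∅

variable (C) in
open Classical in
noncomputable def par : Option (Bool × V) → Option (Bool × V)
  | none => none
  | some (true, a) => some (false, a)
  | some (false, a) => if C.parent a = a then none else some (true, C.head (C.parent a))

variable (C) in
noncomputable def rank : Option (Bool × V) → ℕ
  | none => 0
  | some (false, a) => 2 * C.depth a + 1
  | some (true, a) => 2 * C.depth a + 2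

variable (C) in
open Classical in
noncomputable def top (v : V) : Option (Bool × V) :=
  if C.head v = v then some (false, v) else some (true, C.head v)

lemma bag_pair (ha : C.head a = a) : C.bag (some (true, a)) = C.pairBag a := by
  simp [bag, ha]

lemma bag_link (ha : C.head a = a) : C.bag (some (false, a)) = C.linkBag a := by
  simp [bag, ha]

lemma rank_par : ∀ i ≠ none, C.rank (C.par i) < C.rank i := by
  rintro (_ | ⟨_ | _, a⟩) hi
  · exact absurd rfl hi
  · simp only [par]
    split_ifs with hpa
    · simp [rank]
    · have := depth_parent hpa
      simp only [rank, depth_head]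
      omega
  · simp [par, rank]

lemma mem_bag_top (v : V) : v ∈ C.bag (C.top v) := by
  unfold top
  split_ifs with hv
  · rw [bag_link hv]
    exact Or.inl rfl
  · rw [bag_pair head_head]
    exact mem_pairBag_head v

lemma exists_bag_p₁ (v : V) : ∃ i, v ∈ C.bag i ∧ C.p₁ v ∈ C.bag i := by
  by_cases hv : v ∈ C.T₁.verts
  · refine ⟨some (false, v), ?_⟩
    rw [bag_link (head_of_mem hv)]
    exact ⟨Or.inl rfl, Or.inr (Or.inl rfl)⟩
  · have hp : C.p₁ v = v := treeParent_of_notMem hv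
    rw [hp]
    exact ⟨_, mem_bag_top v, mem_bag_top v⟩

lemma exists_bag_p₂ (v : V) : ∃ i, v ∈ C.bag i ∧ C.p₂ v ∈ C.bag i := by
  by_cases hv : v ∈ C.T₁.verts
  · by_cases hv₂ : v ∈ C.T₂.verts
    · refine ⟨some (false, v), ?_⟩
      rw [bag_link (head_of_mem hv), linkBag, partner_of_mem hv hv₂]
      exact ⟨Or.inl rfl, Or.inr (Or.inr rfl)⟩
    · have hp : C.p₂ v = v := treeParent_of_notMem hv₂
      rw [hp]
      exact ⟨_, mem_bag_top v, mem_bag_top v⟩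
  · refine ⟨some (true, C.head v), ?_⟩
    rw [bag_pair head_head, pairBag, partner_head_of_notMem hv]
    exact ⟨Or.inr (Or.inl rfl), Or.inr (Or.inr rfl)⟩

lemma exists_bag (huv : G.Adj u v) : ∃ i, u ∈ C.bag i ∧ v ∈ C.bag i := by
  rcases C.adj_or huv with h | h
  · rcases C.isometric₁.treeParent_eq_or C.r₁_mem h with rfl | rfl
    · exact (exists_bag_p₁ v).imp fun _ => And.symm
    · exact exists_bag_p₁ u
  · rcases C.isometric₂.treeParent_eq_or C.r₂_mem h with rfl | rfl
    · exact (exists_bag_p₂ v).imp fun _ => And.symm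
    · exact exists_bag_p₂ u

lemma mem_bag_par (v : V) (i : Option (Bool × V)) (hv : v ∈ C.bag i) (hi : i ≠ C.top v) :
    i ≠ none ∧ v ∈ C.bag (C.par i) := by
  obtain _ | ⟨b, a⟩ := i
  · exact absurd hv (Set.notMem_empty v)
  refine ⟨Option.some_ne_none _, ?_⟩
  have ha : C.head a = a := by
    by_contra ha
    simp [bag, ha] at hv
  cases b with
  | false =>
    have hva : v ≠ a := by
      rintro rfl
      exact hi (by simp [top, ha])
    rw [bag_link ha] at hv
    obtain ⟨hpa, hv⟩ := (eq_or_mem_pairBag_parent ha (hv.resolve_left hva)).resolve_left hva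
    rwa [par, if_neg hpa, bag_pair head_head]
  | true =>
    rw [bag_pair ha] at hv
    rw [par, bag_link ha]
    rcases hv with rfl | rfl | rfl
    · exact Or.inl rfl
    · by_cases hp : C.partner a = a
      · exact Or.inl hp
      · exact absurd (by simp [top, head_partner ha hp, Ne.symm hp]) hi
    · exact Or.inr (Or.inr rfl)

lemma encard_bag (i : Option (Bool × V)) : (C.bag i).encard ≤ 2 + 1 := by
  have (a b c : V) : ({a, b, c} : Set V).encard ≤ 2 + 1 := by
    calc ({a, b, c} : Set V).encard ≤ ({b, c} : Set V).encard + 1 := Set.encard_insert_le _ _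
      _ ≤ ({c} : Set V).encard + 1 + 1 := by gcongr; exact Set.encard_insert_le _ _
      _ = 2 + 1 := by rw [Set.encard_singleton]; rfl
  rcases i with _ | ⟨_ | _, a⟩ <;> simp only [bag]
  · simp
  all_goals split_ifs <;> simp [pairBag, linkBag, this]

theorem treewidth_le_two [Finite V] (C : IsometricTreeCover G) : treewidth G ≤ 2 :=
  treewidth_le_of_parent (rank_par (C := C)) mem_bag_top (fun _ _ => exists_bag) mem_bag_par
    encard_bag

end IsometricTreeCover

end

/-- Every graph whose edge set can be covered by two isometric subtrees has
treewidth at most `2` (in particular so does every such `2`-connected graph). -/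
theorem treewidth_le_two_of_two_isometric_trees {V : Type*} [Finite V]
    (G : SimpleGraph V) (T₁ T₂ : G.Subgraph)
    (h₁ : T₁.coe.IsTree) (h₂ : T₂.coe.IsTree)
    (hiso₁ : ∀ x y : T₁.verts, T₁.coe.dist x y = G.dist x y)
    (hiso₂ : ∀ x y : T₂.verts, T₂.coe.dist x y = G.dist x y)
    (hcov : ∀ ⦃u v : V⦄, G.Adj u v → T₁.Adj u v ∨ T₂.Adj u v) :
    treewidth G ≤ 2 := by
  obtain ⟨r₁, hr₁, r₂, hr₂, hr⟩ : ∃ r₁ ∈ T₁.verts, ∃ r₂ ∈ T₂.verts,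
      ∀ v ∈ T₁.verts, v ∈ T₂.verts → r₁ = r₂ := by
    by_cases h : ∃ v ∈ T₁.verts, v ∈ T₂.verts
    · obtain ⟨v, hv₁, hv₂⟩ := h
      exact ⟨v, hv₁, v, hv₂, fun _ _ _ => rfl⟩
    · obtain ⟨⟨r₁, hr₁⟩⟩ := h₁.connected.nonempty
      obtain ⟨⟨r₂, hr₂⟩⟩ := h₂.connected.nonempty
      exact ⟨r₁, hr₁, r₂, hr₂, fun v hv₁ hv₂ => absurd ⟨v, hv₁, hv₂⟩ h⟩
  exact IsometricTreeCover.treewidth_le_two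
    ⟨T₁, T₂, ⟨h₁, hiso₁⟩, ⟨h₂, hiso₂⟩, hcov, r₁, r₂, hr₁, hr₂, hr⟩
end

section
/- For every t >= 1, let G_t be the graph obtained from the complete bipartite graph K_{t,t} with sides S and S' by adding two new vertices a and b, where a is adjacent to all of S and b is adjacent to all of S'. Then G_t is vertex-coverable by two isometric trees (the stars centered at a and at b), and yet G_t has treewidth at least t. -/
/-- The graph `G_t`: the complete bipartite graph `K_{t,t}` with sides
`S = inl (inl _)` and `S' = inl (inr _)`, together with two extra vertices
`a = inr true` adjacent to all of `S` and `b = inr false` adjacent to all of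
`S'`. -/
def Gt (t : ℕ) : SimpleGraph ((Fin t ⊕ Fin t) ⊕ Bool) :=
  SimpleGraph.fromRel (fun x y =>
    match x, y with
    | Sum.inl (Sum.inl _), Sum.inl (Sum.inr _) => True
    | Sum.inr true, Sum.inl (Sum.inl _) => True
    | Sum.inr false, Sum.inl (Sum.inr _) => True
    | _, _ => False)

namespace SimpleGraph

section PathClosed
variable {ι : Type*} {T : SimpleGraph ι}

def IsPathClosed (T : SimpleGraph ι) (S : Set ι) : Prop :=
  ∀ ⦃x y : ι⦄ (p : T.Walk x y), p.IsPath → x ∈ S → y ∈ S → ∀ z ∈ p.support, z ∈ S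

lemma IsAcyclic.support_subset_of_isPath (hT : T.IsAcyclic) {x y : ι} {p : T.Walk x y}
    (hp : p.IsPath) (q : T.Walk x y) : p.support ⊆ q.support := by
  classical
  have : (⟨p, hp⟩ : T.Path x y) = ⟨q.bypass, q.bypass_isPath⟩ :=
    (hT.subsingleton_path x y).elim _ _
  rw [show p = q.bypass from congrArg Subtype.val this]
  exact q.support_bypass_subset_support

lemma IsAcyclic.isPathClosed_of_preconnected_induce (hT : T.IsAcyclic) {S : Set ι}
    (hS : (T.induce S).Preconnected) : T.IsPathClosed S := by
  intro x y p hp hx hy z hz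
  obtain ⟨w⟩ := hS ⟨x, hx⟩ ⟨y, hy⟩
  have hwS : ∀ z ∈ (w.map (Embedding.induce S).toHom).support, z ∈ S := by
    intro z' hz'
    rw [Walk.support_map, List.mem_map] at hz'
    obtain ⟨⟨z', hz'S⟩, -, rfl⟩ := hz'
    exact hz'S
  exact hwS z (hT.support_subset_of_isPath hp _ hz)

namespace IsPathClosed
variable {S : Set ι}

lemma exists_gate (hS : T.IsPathClosed S) {i j : ι} (w : T.Walk i j) (hj : j ∈ S) :
    ∃ g ∈ S, ∀ k ∈ S, ∀ p : T.Walk i k, g ∈ p.support := by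
  classical
  induction w with
  | nil => exact ⟨_, hj, fun k _ p => p.start_mem_support⟩
  | @cons i i' j hadj w ih =>
    by_cases hi : i ∈ S
    · exact ⟨i, hi, fun k _ p => p.start_mem_support⟩
    obtain ⟨g, hg, hgate⟩ := ih hj
    refine ⟨g, hg, fun k hk p => ?_⟩
    have hg' : g ∈ (Walk.cons hadj.symm p).support := hgate k hk _
    rw [Walk.support_cons, List.mem_cons] at hg'
    by_contra hgp
    obtain rfl : g = i' := hg'.resolve_right hgp
    -- the path from `g` to `k` through `i` would leave `S` at `i`
    have hpath : (Walk.cons hadj.symm p.bypass).IsPath :=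
      (Walk.cons_isPath_iff _ _).mpr
        ⟨p.bypass_isPath, fun h => hgp (p.support_bypass_subset_support h)⟩
    exact hi (hS _ hpath hg hk i (by simp))

lemma mem_of_forall_mem_support (hT : T.Preconnected) (hS : T.IsPathClosed S) {x y g : ι}
    (hx : x ∈ S) (hy : y ∈ S) (hg : ∀ p : T.Walk x y, g ∈ p.support) : g ∈ S := by
  classical
  obtain ⟨p⟩ := hT x y
  exact hS p.bypass p.bypass_isPath hx hy g (hg _)

lemma exists_gate_of_disjoint (hT : T.Preconnected) {S₁ S₂ : Set ι} (h₁ : T.IsPathClosed S₁)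
    (h₂ : T.IsPathClosed S₂) (hdisj : Disjoint S₁ S₂) {p q : ι} (hp : p ∈ S₁) (hq : q ∈ S₂) :
    ∃ g ∈ S₂, ∀ y ∈ S₁, ∀ z ∈ S₂, ∀ w : T.Walk y z, g ∈ w.support := by
  obtain ⟨g, hg, hgate⟩ := h₂.exists_gate (hT p q).some hq
  refine ⟨g, hg, fun y hy z hz w => ?_⟩
  obtain ⟨r, hr⟩ := (hT p y).exists_isPath
  have hgr : g ∉ r.support := fun h => hdisj.notMem_of_mem_right hg (h₁ r hr hp hy g h)
  simpa [Walk.mem_support_append_iff, hgr] using hgate z hz (r.append w)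

end IsPathClosed

variable {V : Type*} {S : V → Set ι}

theorem helly_of_isPathClosed (hT : T.Preconnected) (hS : ∀ v, T.IsPathClosed (S v))
    {F : Finset V} (hF : F.Nonempty) (hmeet : ∀ u ∈ F, ∀ v ∈ F, (S u ∩ S v).Nonempty) :
    ∃ i, ∀ v ∈ F, i ∈ S v := by
  induction hF using Finset.Nonempty.cons_induction with
  | singleton v =>
    obtain ⟨i, hi, -⟩ := hmeet v (by simp) v (by simp)
    exact ⟨i, by simpa using hi⟩
  | cons a F ha hF ih =>
    obtain ⟨p, hp⟩ := ih fun u hu v hv =>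
      hmeet u (F.mem_cons_of_mem hu) v (F.mem_cons_of_mem hv)
    obtain ⟨q, hq, -⟩ := hmeet a (F.mem_cons_self a) a (F.mem_cons_self a)
    obtain ⟨g, hg, hgate⟩ := (hS a).exists_gate (hT p q).some hq
    refine ⟨g, fun v hv => ?_⟩
    rcases Finset.mem_cons.mp hv with rfl | hv
    · exact hg
    obtain ⟨x, hxv, hxa⟩ := hmeet v (F.mem_cons_of_mem hv) a (F.mem_cons_self a)
    exact (hS v).mem_of_forall_mem_support hT (hp v hv) hxv (hgate x hxa)

theorem exists_mem_forall_mem_or_forall_mem (hT : T.Preconnected)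
    (hS : ∀ v, T.IsPathClosed (S v)) {A B : Finset V} (hA : A.Nonempty) (hB : B.Nonempty)
    (hAB : ∀ a ∈ A, ∀ b ∈ B, (S a ∩ S b).Nonempty) :
    (∃ i, ∃ b ∈ B, i ∈ S b ∧ ∀ a ∈ A, i ∈ S a) ∨
      (∃ i, ∃ a ∈ A, i ∈ S a ∧ ∀ b ∈ B, i ∈ S b) := by
  obtain ⟨b₀, hb₀⟩ := hB
  by_cases hAmeet : ∀ a ∈ A, ∀ a' ∈ A, (S a ∩ S a').Nonempty
  · left
    obtain ⟨p, hp⟩ := helly_of_isPathClosed hT hS hA hAmeet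
    obtain ⟨a₀, ha₀⟩ := hA
    obtain ⟨q, -, hq⟩ := hAB a₀ ha₀ b₀ hb₀
    obtain ⟨g, hg, hgate⟩ := (hS b₀).exists_gate (hT p q).some hq
    refine ⟨g, b₀, hb₀, hg, fun a ha => ?_⟩
    obtain ⟨x, hxa, hxb⟩ := hAB a ha b₀ hb₀
    exact (hS a).mem_of_forall_mem_support hT (hp a ha) hxa (hgate x hxb)
  · right
    push Not at hAmeet
    obtain ⟨a₁, ha₁, a₂, ha₂, hdisj⟩ := hAmeet
    obtain ⟨p, hp, -⟩ := hAB a₁ ha₁ b₀ hb₀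
    obtain ⟨q, hq, -⟩ := hAB a₂ ha₂ b₀ hb₀
    obtain ⟨g, hg, hgate⟩ := (hS a₁).exists_gate_of_disjoint hT (hS a₂)
      (Set.disjoint_iff_inter_eq_empty.mpr hdisj) hp hq
    refine ⟨g, a₂, ha₂, hg, fun b hb => ?_⟩
    obtain ⟨y, hya, hyb⟩ := hAB a₁ ha₁ b hb
    obtain ⟨z, hza, hzb⟩ := hAB a₂ ha₂ b hb
    exact (hS b).mem_of_forall_mem_support hT hyb hzb (hgate y hya z hza)

end PathClosed

section Star
variable {V : Type*} (G : SimpleGraph V) (c : V)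

def starSubgraph : G.Subgraph where
  verts := insert c (G.neighborSet c)
  Adj x y := G.Adj x y ∧ (x = c ∨ y = c)
  adj_sub h := h.1
  edge_vert := by
    rintro x y ⟨h, rfl | rfl⟩
    · exact Set.mem_insert _ _
    · exact Set.mem_insert_of_mem _ h.symm
  symm := ⟨fun _ _ h => ⟨h.1.symm, h.2.symm⟩⟩

lemma starSubgraph_coe_eq_starGraph :
    (G.starSubgraph c).coe = starGraph ⟨c, Set.mem_insert c _⟩ := by
  ext ⟨x, hx⟩ ⟨y, hy⟩
  simp only [Subgraph.coe_adj, starSubgraph, starGraph_adj, ne_eq, Subtype.ext_iff]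
  constructor
  · rintro ⟨h, hc⟩
    exact ⟨h.ne, hc⟩
  · rintro ⟨hne, rfl | rfl⟩
    · exact ⟨hy.resolve_left (Ne.symm hne), Or.inl rfl⟩
    · exact ⟨(hx.resolve_left hne).symm, Or.inr rfl⟩

lemma starSubgraph_coe_isTree : (G.starSubgraph c).coe.IsTree := by
  rw [starSubgraph_coe_eq_starGraph]
  exact isTree_starGraph _

variable {G c}

lemma starSubgraph_coe_adj_iff (hc : G.IsIndepSet (G.neighborSet c))
    {x y : (G.starSubgraph c).verts} : (G.starSubgraph c).coe.Adj x y ↔ G.Adj x y := by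
  obtain ⟨x, rfl | hx⟩ := x
  · exact ⟨fun h => h.1, fun h => ⟨h, Or.inl rfl⟩⟩
  obtain ⟨y, rfl | hy⟩ := y
  · exact ⟨fun h => h.1, fun h => ⟨h, Or.inr rfl⟩⟩
  exact ⟨fun h => h.1, fun h => absurd h (hc hx hy h.ne)⟩

lemma starSubgraph_edist_coe (hc : G.IsIndepSet (G.neighborSet c))
    (x y : (G.starSubgraph c).verts) : (G.starSubgraph c).coe.edist x y = G.edist x y := by
  rcases eq_or_ne x y with rfl | hne
  · simp
  by_cases hadj : G.Adj x y
  · rw [edist_eq_one_iff_adj.mpr hadj,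
      edist_eq_one_iff_adj.mpr ((starSubgraph_coe_adj_iff hc).mpr hadj)]
  obtain ⟨x, hx⟩ := x
  obtain ⟨y, hy⟩ := y
  have hne' : x ≠ y := fun h => hne (Subtype.ext h)
  -- two non-adjacent vertices of the star are leaves, with the centre as common neighbour
  have hxc : G.Adj x c := by
    rcases hx with rfl | hx
    · exact absurd (hy.resolve_left (Ne.symm hne')) hadj
    · exact hx.symm
  have hyc : G.Adj y c := by
    rcases hy with rfl | hy
    · exact absurd (hx.resolve_left hne').symm hadj
    · exact hy.symm
  have hcoe : ∀ {z : V} (hz : z ∈ (G.starSubgraph c).verts), G.Adj z c →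
      (G.starSubgraph c).coe.Adj ⟨z, hz⟩ ⟨c, Set.mem_insert c _⟩ :=
    fun _ h => (starSubgraph_coe_adj_iff hc).mpr h
  rw [edist_eq_two_iff.mpr ⟨hne', hadj, c, (mem_commonNeighbors _).mpr ⟨hxc, hyc⟩⟩,
    edist_eq_two_iff.mpr ⟨hne, fun h => hadj ((starSubgraph_coe_adj_iff hc).mp h), _,
      (mem_commonNeighbors _).mpr ⟨hcoe hx hxc, hcoe hy hyc⟩⟩]

lemma starSubgraph_dist_coe (hc : G.IsIndepSet (G.neighborSet c))
    (x y : (G.starSubgraph c).verts) : (G.starSubgraph c).coe.dist x y = G.dist x y :=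
  congrArg ENat.toNat (starSubgraph_edist_coe hc x y)

end Star

end SimpleGraph

open Finset

lemma Finset.natCast_card_add_one_le_encard {V : Type*} {s : Set V} {A : Finset V} {b : V}
    (hb : b ∉ A) (h : insert b (A : Set V) ⊆ s) : ((#A + 1 : ℕ) : ℕ∞) ≤ s.encard := by
  rw [Nat.cast_add, Nat.cast_one, ← Set.encard_coe_eq_coe_finsetCard,
    ← Set.encard_insert_of_notMem (mt Finset.mem_coe.mp hb)]
  exact Set.encard_le_encard h

lemma IsTreeDecomp.exists_le_encard_bag {V : Type*} {ι : Type} {G : SimpleGraph V}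
    {T : SimpleGraph ι} {bag : ι → Set V} (hD : IsTreeDecomp G T bag) {A B : Finset V}
    (hA : A.Nonempty) (hB : B.Nonempty) (hAB : ∀ a ∈ A, ∀ b ∈ B, G.Adj a b) :
    ∃ i, ((min #A #B + 1 : ℕ) : ℕ∞) ≤ (bag i).encard := by
  obtain ⟨hT, -, hedge, hconn⟩ := hD
  have hS : ∀ v, T.IsPathClosed {i | v ∈ bag i} := fun v =>
    hT.isAcyclic.isPathClosed_of_preconnected_induce (hconn v).preconnected
  rcases SimpleGraph.exists_mem_forall_mem_or_forall_mem hT.connected.preconnected hS hA hB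
    fun a ha b hb => hedge (hAB a ha b hb) with ⟨i, b, hb, hib, hiA⟩ | ⟨i, a, ha, hia, hiB⟩
  · have hbA : b ∉ A := fun h => (hAB b h b hb).ne rfl
    refine ⟨i, le_trans ?_ (natCast_card_add_one_le_encard hbA ?_)⟩
    · exact_mod_cast Nat.add_le_add_right (min_le_left _ _) 1
    · simpa [Set.insert_subset_iff] using ⟨hib, hiA⟩
  · have haB : a ∉ B := fun h => (hAB a ha a h).ne rfl
    refine ⟨i, le_trans ?_ (natCast_card_add_one_le_encard haB ?_)⟩
    · exact_mod_cast Nat.add_le_add_right (min_le_right _ _) 1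
    · simpa [Set.insert_subset_iff] using ⟨hia, hiB⟩

theorem SimpleGraph.min_card_le_treewidth {V : Type*} {G : SimpleGraph V} {A B : Finset V}
    (hAB : ∀ a ∈ A, ∀ b ∈ B, G.Adj a b) : ((min #A #B : ℕ) : ℕ∞) ≤ treewidth G := by
  rcases A.eq_empty_or_nonempty with rfl | hA
  · simp
  rcases B.eq_empty_or_nonempty with rfl | hB
  · simp
  refine le_sInf fun w ⟨ι, T, bag, hD, hbag⟩ => ?_
  obtain ⟨i, hi⟩ := hD.exists_le_encard_bag hA hB hAB
  have h := hi.trans (hbag i)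
  push_cast at h
  exact (ENat.add_le_add_iff_right ENat.one_ne_top).mp h

lemma Gt_isIndepSet_neighborSet (t : ℕ) (b : Bool) :
    (Gt t).IsIndepSet ((Gt t).neighborSet (Sum.inr b)) := by
  rintro ((x | x) | x) hx ((y | y) | y) hy -
  all_goals cases b <;> simp_all [Gt]

lemma Gt_starSubgraph_verts_union (t : ℕ) :
    ((Gt t).starSubgraph (Sum.inr true)).verts ∪ ((Gt t).starSubgraph (Sum.inr false)).verts =
      Set.univ := by
  ext ((x | x) | (_ | _)) <;> simp [SimpleGraph.starSubgraph, Gt]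

theorem Gt_two_isometric_trees_large_treewidth_general (t : ℕ) :
    (∃ T₁ T₂ : (Gt t).Subgraph,
      T₁.coe.IsTree ∧ T₂.coe.IsTree ∧
      (∀ x y : T₁.verts, T₁.coe.dist x y = (Gt t).dist x y) ∧
      (∀ x y : T₂.verts, T₂.coe.dist x y = (Gt t).dist x y) ∧
      T₁.verts ∪ T₂.verts = Set.univ) ∧
    (t : ℕ∞) ≤ treewidth (Gt t) := by
  refine ⟨⟨_, _, (Gt t).starSubgraph_coe_isTree (Sum.inr true),
    (Gt t).starSubgraph_coe_isTree (Sum.inr false),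
    SimpleGraph.starSubgraph_dist_coe (Gt_isIndepSet_neighborSet t true),
    SimpleGraph.starSubgraph_dist_coe (Gt_isIndepSet_neighborSet t false),
    Gt_starSubgraph_verts_union t⟩, ?_⟩
  have hKtt := SimpleGraph.min_card_le_treewidth (G := Gt t)
    (A := univ.map (Function.Embedding.inl.trans Function.Embedding.inl))
    (B := univ.map (Function.Embedding.inr.trans Function.Embedding.inl)) (by simp [Gt])
  simpa using hKtt

/-- For every `t ≥ 1`, the graph `G_t` is vertex-coverable by two isometric
subtrees (the stars centered at `a` and `b`), yet has treewidth at least `t`. -/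
theorem Gt_two_isometric_trees_large_treewidth (t : ℕ) (ht : 1 ≤ t) :
    (∃ T₁ T₂ : (Gt t).Subgraph,
      T₁.coe.IsTree ∧ T₂.coe.IsTree ∧
      (∀ x y : T₁.verts, T₁.coe.dist x y = (Gt t).dist x y) ∧
      (∀ x y : T₂.verts, T₂.coe.dist x y = (Gt t).dist x y) ∧
      T₁.verts ∪ T₂.verts = Set.univ) ∧
    (t : ℕ∞) ≤ treewidth (Gt t) :=
  Gt_two_isometric_trees_large_treewidth_general t
end
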